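/- arXiv:1306.5926 — 6 statements merged into one kernel-verified Lean document; each statement's English description precedes it below -/
import Mathlib

section
/- If a permutation π contains a triple adjacency, i.e., three consecutive positions i, i+1, i+2 with π(i+1) = π(i)+1 and π(i+2) = π(i)+2, then μ(1, π) = 0 in the pattern containment poset. -/
open scoped Classical

/-- `σ` occurs as a pattern in `π`. -/
def Occurs {k n : ℕ} (σ : Equiv.Perm (Fin k)) (π : Equiv.Perm (Fin n)) : Prop :=
  ∃ f : Fin k → Fin n, StrictMono f ∧ ∀ a b : Fin k, σ a < σ b ↔ π (f a) < π (f b)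

/-- A permutation of arbitrary length. -/
abbrev PermWord := Σ n : ℕ, Equiv.Perm (Fin n)

/-- Pattern containment order. -/
def PatLE (σ π : PermWord) : Prop := Occurs σ.2 π.2

def PatLT (σ π : PermWord) : Prop := PatLE σ π ∧ σ ≠ π

/-- The permutation 1 of length one. -/
def permOne : PermWord := ⟨1, 1⟩

/-- `mu` is the Möbius function of the pattern containment poset. -/
def IsMobius (mu : PermWord → PermWord → ℤ) : Prop :=
  (∀ σ, mu σ σ = 1) ∧
  (∀ σ π : PermWord, PatLT σ π →
      mu σ π = - ∑ m ∈ Finset.range (π.1 + 1), ∑ z : Equiv.Perm (Fin m),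
        if PatLE σ ⟨m, z⟩ ∧ PatLT ⟨m, z⟩ π then mu σ ⟨m, z⟩ else 0) ∧
  (∀ σ π : PermWord, ¬ PatLE σ π → mu σ π = 0)

/-- `π` has a descent at (0-based) position `i`. -/
def descends {n : ℕ} (π : Equiv.Perm (Fin n)) (i : ℕ) : Prop :=
  ∃ h : i + 1 < n, π ⟨i + 1, h⟩ < π ⟨i, Nat.lt_of_succ_lt h⟩

/-- Number of descents of `π`. -/
noncomputable def descentCount {n : ℕ} (π : Equiv.Perm (Fin n)) : ℕ :=
  ((Finset.range n).filter fun i => descends π i).card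

/-- `π` has an (increasing) adjacency at (0-based) position `i`. -/
def adjAt {n : ℕ} (π : Equiv.Perm (Fin n)) (i : ℕ) : Prop :=
  ∃ h : i + 1 < n, (π ⟨i + 1, h⟩ : ℕ) = (π ⟨i, Nat.lt_of_succ_lt h⟩ : ℕ) + 1

/-- `π` has a decreasing adjacency at (0-based) position `i`. -/
def adjAtDesc {n : ℕ} (π : Equiv.Perm (Fin n)) (i : ℕ) : Prop :=
  ∃ h : i + 1 < n, (π ⟨i, Nat.lt_of_succ_lt h⟩ : ℕ) = (π ⟨i + 1, h⟩ : ℕ) + 1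

/-- Number of adjacencies of `π` (a run of `k+1` consecutive values counts as `k`). -/
noncomputable def adjCount {n : ℕ} (π : Equiv.Perm (Fin n)) : ℕ :=
  ((Finset.range n).filter fun i => adjAt π i).card

/-- `π` begins with the value 1 (0-based value 0). -/
def beginsWithOne {n : ℕ} (π : Equiv.Perm (Fin n)) : Prop :=
  ∃ h : 0 < n, (π ⟨0, h⟩ : ℕ) = 0

/-- `π` ends with the value `n` (0-based value `n-1`). -/
def endsWithTop {n : ℕ} (π : Equiv.Perm (Fin n)) : Prop :=
  ∃ h : 0 < n, (π ⟨n - 1, Nat.sub_lt h one_pos⟩ : ℕ) = n - 1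

/-! ### Auxiliary material -/

lemma strictMono_fin_id {n : ℕ} (f : Fin n → Fin n) (hf : StrictMono f) : ∀ x, f x = x := by
  haveI : WellFoundedLT (Fin n) := inferInstance
  haveI : WellFoundedGT (Fin n) := inferInstance
  intro x
  have h1 : f x ≤ x := hf.apply_le
  have h2 : x ≤ f x := hf.le_apply
  exact le_antisymm h1 h2

lemma occurs_card_le {k n : ℕ} {σ : Equiv.Perm (Fin k)} {π : Equiv.Perm (Fin n)}
    (h : Occurs σ π) : k ≤ n := by
  obtain ⟨f, hf, -⟩ := h
  simpa using Fintype.card_le_of_injective f hf.injective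

lemma occurs_refl {n : ℕ} (π : Equiv.Perm (Fin n)) : Occurs π π :=
  ⟨id, strictMono_id, fun _ _ => Iff.rfl⟩

lemma eq_of_occurs_self {n : ℕ} {σ π : Equiv.Perm (Fin n)} (h : Occurs σ π) : σ = π := by
  obtain ⟨f, hf, hp⟩ := h
  have hid : ∀ x, f x = x := strictMono_fin_id f hf
  have hp' : ∀ a b, σ a < σ b ↔ π a < π b := by
    intro a b
    have := hp a b
    rwa [hid a, hid b] at this
  have hw : StrictMono fun x => π (σ.symm x) := by
    intro u v huv
    have := (hp' (σ.symm u) (σ.symm v)).mp (by simpa using huv)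
    exact this
  have := strictMono_fin_id _ hw
  ext x
  have : π (σ.symm (σ x)) = σ x := this (σ x)
  simp only [Equiv.symm_apply_apply] at this
  exact congrArg Fin.val this.symm

lemma permOne_le {N : ℕ} (hN : 0 < N) (τ : Equiv.Perm (Fin N)) : PatLE permOne ⟨N, τ⟩ := by
  change Occurs (1 : Equiv.Perm (Fin 1)) τ
  refine ⟨fun _ => ⟨0, hN⟩, fun a b hab => absurd hab (by simp [Subsingleton.elim a b]), ?_⟩
  intro a b
  have : a = b := Subsingleton.elim a b
  subst this
  simp

/-- delete the entry at position `p` from `π` and standardize. -/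
noncomputable def delPerm {k : ℕ} (π : Equiv.Perm (Fin (k+1))) (p : Fin (k+1)) :
    Equiv.Perm (Fin k) :=
  (finSuccAboveEquiv p).trans
    ((π.subtypeEquiv (fun a => by
        constructor
        · intro h he; exact h (π.injective he)
        · intro h he; exact h (congrArg π he))).trans
      (finSuccAboveEquiv (π p)).symm)

lemma delPerm_spec {k : ℕ} (π : Equiv.Perm (Fin (k+1))) (p : Fin (k+1)) (j : Fin k) :
    (π p).succAbove (delPerm π p j) = π (p.succAbove j) := by
  have h1 : delPerm π p j
      = (finSuccAboveEquiv (π p)).symm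
          ⟨π (p.succAbove j), fun he => (p.succAbove_ne j) (π.injective he)⟩ := by
    simp [delPerm, finSuccAboveEquiv_apply, Equiv.subtypeEquiv]
  rw [h1]
  have := (finSuccAboveEquiv (π p)).apply_symm_apply
    ⟨π (p.succAbove j), fun he => (p.succAbove_ne j) (π.injective he)⟩
  rw [finSuccAboveEquiv_apply] at this
  exact congrArg Subtype.val this

lemma occurs_of_occurs_del {k m : ℕ} {π : Equiv.Perm (Fin (k+1))} {p : Fin (k+1)}
    {z : Equiv.Perm (Fin m)} (h : Occurs z (delPerm π p)) : Occurs z π := by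
  obtain ⟨g, hg, hpat⟩ := h
  refine ⟨fun a => p.succAbove (g a),
    fun a b hab => Fin.succAbove_lt_succAbove_iff.mpr (hg hab), ?_⟩
  intro a b
  rw [hpat a b, ← delPerm_spec π p, ← delPerm_spec π p, Fin.succAbove_lt_succAbove_iff]

lemma occurs_del_of_occurs_avoid {k m : ℕ} {π : Equiv.Perm (Fin (k+1))} {p : Fin (k+1)}
    {z : Equiv.Perm (Fin m)} (f : Fin m → Fin (k+1)) (hf : StrictMono f)
    (hpat : ∀ a b, z a < z b ↔ π (f a) < π (f b)) (havoid : ∀ a, f a ≠ p) :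
    Occurs z (delPerm π p) := by
  set g : Fin m → Fin k := fun a => (finSuccAboveEquiv p).symm ⟨f a, havoid a⟩ with hgdef
  have hfg : ∀ a, p.succAbove (g a) = f a := by
    intro a
    have := (finSuccAboveEquiv p).apply_symm_apply ⟨f a, havoid a⟩
    rw [finSuccAboveEquiv_apply] at this
    exact congrArg Subtype.val this
  refine ⟨g, ?_, ?_⟩
  · intro a b hab
    have : p.succAbove (g a) < p.succAbove (g b) := by rw [hfg a, hfg b]; exact hf hab
    exact Fin.succAbove_lt_succAbove_iff.mp this
  · intro a b
    rw [hpat a b, ← hfg a, ← hfg b, ← delPerm_spec π p (g a), ← delPerm_spec π p (g b),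
      Fin.succAbove_lt_succAbove_iff]

lemma occurrence_modify {n m : ℕ} (π : Equiv.Perm (Fin n))
    (I0 I1 I2 : Fin n) (hI1 : (I1 : ℕ) = (I0 : ℕ) + 1) (hI2 : (I2 : ℕ) = (I1 : ℕ) + 1)
    (hv1 : (π I1 : ℕ) = (π I0 : ℕ) + 1) (hv2 : (π I2 : ℕ) = (π I1 : ℕ) + 1)
    (z : Equiv.Perm (Fin m)) (hz : ¬ ∃ j, adjAt z j ∧ adjAt z (j + 1))
    (f : Fin m → Fin n) (hf : StrictMono f)
    (hpat : ∀ a b, z a < z b ↔ π (f a) < π (f b)) :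
    ∃ f' : Fin m → Fin n, StrictMono f' ∧ (∀ a b, z a < z b ↔ π (f' a) < π (f' b)) ∧
      ∀ a, f' a ≠ I1 := by
  by_cases h1 : ∀ a, f a ≠ I1
  · exact ⟨f, hf, hpat, h1⟩
  push_neg at h1; obtain ⟨j, hj⟩ := h1
  have hinj := hf.injective
  by_cases h0 : ∀ a, f a ≠ I0
  · -- replace I1 by I0
    refine ⟨Function.update f j I0, ?_, ?_, ?_⟩
    · intro a b hab
      by_cases hA : a = j
      · subst hA
        have hb : b ≠ a := (ne_of_gt hab)
        rw [Function.update_self, Function.update_of_ne hb]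
        have h' : f a < f b := hf hab
        rw [hj] at h'
        rw [Fin.lt_def] at h' ⊢; omega
      · by_cases hB : b = j
        · subst hB
          rw [Function.update_of_ne hA, Function.update_self]
          have h' : f a < f b := hf hab
          rw [hj] at h'
          have hne : (f a : ℕ) ≠ (I0 : ℕ) := fun hh => (h0 a) (Fin.ext hh)
          rw [Fin.lt_def] at h' ⊢; omega
        · rw [Function.update_of_ne hA, Function.update_of_ne hB]; exact hf hab
    · intro a b
      by_cases hA : a = j
      · subst hA
        by_cases hB : b = a
        · subst hB
          constructor <;> (intro hh; exact absurd hh (lt_irrefl _))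
        · rw [Function.update_self, Function.update_of_ne hB]
          have horig := hpat a b
          rw [hj] at horig
          rw [horig, Fin.lt_def, Fin.lt_def]
          have hne0 : (π (f b) : ℕ) ≠ (π I0 : ℕ) := fun hh =>
            (h0 b) (π.injective (Fin.ext hh))
          have hne1 : (π (f b) : ℕ) ≠ (π I1 : ℕ) := fun hh =>
            hB (hinj (by rw [hj]; exact π.injective (Fin.ext hh)))
          omega
      · by_cases hB : b = j
        · subst hB
          rw [Function.update_of_ne hA, Function.update_self]
          have horig := hpat a b
          rw [hj] at horig
          rw [horig, Fin.lt_def, Fin.lt_def]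
          have hne0 : (π (f a) : ℕ) ≠ (π I0 : ℕ) := fun hh =>
            (h0 a) (π.injective (Fin.ext hh))
          omega
        · rw [Function.update_of_ne hA, Function.update_of_ne hB]; exact hpat a b
    · intro a
      by_cases hA : a = j
      · subst hA
        rw [Function.update_self]; intro hh
        rw [hh] at hI1; omega
      · rw [Function.update_of_ne hA]
        intro hh; exact hA (hinj (hh.trans hj.symm))
  push_neg at h0; obtain ⟨j0, hj0⟩ := h0
  by_cases h2 : ∀ a, f a ≠ I2
  · -- replace I1 by I2
    refine ⟨Function.update f j I2, ?_, ?_, ?_⟩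
    · intro a b hab
      by_cases hA : a = j
      · subst hA
        have hb : b ≠ a := (ne_of_gt hab)
        rw [Function.update_self, Function.update_of_ne hb]
        have h' : f a < f b := hf hab
        rw [hj] at h'
        have hne : (f b : ℕ) ≠ (I2 : ℕ) := fun hh => (h2 b) (Fin.ext hh)
        rw [Fin.lt_def] at h' ⊢; omega
      · by_cases hB : b = j
        · subst hB
          rw [Function.update_of_ne hA, Function.update_self]
          have h' : f a < f b := hf hab
          rw [hj] at h'
          rw [Fin.lt_def] at h' ⊢; omega
        · rw [Function.update_of_ne hA, Function.update_of_ne hB]; exact hf hab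
    · intro a b
      by_cases hA : a = j
      · subst hA
        by_cases hB : b = a
        · subst hB
          constructor <;> (intro hh; exact absurd hh (lt_irrefl _))
        · rw [Function.update_self, Function.update_of_ne hB]
          have horig := hpat a b
          rw [hj] at horig
          rw [horig, Fin.lt_def, Fin.lt_def]
          have hne1 : (π (f b) : ℕ) ≠ (π I1 : ℕ) := fun hh =>
            hB (hinj (by rw [hj]; exact π.injective (Fin.ext hh)))
          have hne2 : (π (f b) : ℕ) ≠ (π I2 : ℕ) := fun hh =>
            (h2 b) (π.injective (Fin.ext hh))
          omega
      · by_cases hB : b = j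
        · subst hB
          rw [Function.update_of_ne hA, Function.update_self]
          have horig := hpat a b
          rw [hj] at horig
          rw [horig, Fin.lt_def, Fin.lt_def]
          have hne1 : (π (f a) : ℕ) ≠ (π I1 : ℕ) := fun hh =>
            hA (hinj (by rw [hj]; exact π.injective (Fin.ext hh)))
          have hne2 : (π (f a) : ℕ) ≠ (π I2 : ℕ) := fun hh =>
            (h2 a) (π.injective (Fin.ext hh))
          omega
        · rw [Function.update_of_ne hA, Function.update_of_ne hB]; exact hpat a b
    · intro a
      by_cases hA : a = j
      · subst hA
        rw [Function.update_self]; intro hh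
        rw [hh] at hI2; omega
      · rw [Function.update_of_ne hA]
        intro hh; exact hA (hinj (hh.trans hj.symm))
  push_neg at h2; obtain ⟨j2, hj2⟩ := h2
  exfalso
  have hlt01 : j0 < j := by
    have : f j0 < f j := by rw [hj0, hj, Fin.lt_def]; omega
    exact hf.lt_iff_lt.mp this
  have hlt12 : j < j2 := by
    have : f j < f j2 := by rw [hj2, hj, Fin.lt_def]; omega
    exact hf.lt_iff_lt.mp this
  have hpos1 : (j : ℕ) = (j0 : ℕ) + 1 := by
    by_contra hc
    have hlt : (j0 : ℕ) + 1 < (j : ℕ) := by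
      have := (Fin.lt_def.mp hlt01); omega
    set u : Fin m := ⟨(j0 : ℕ) + 1, lt_trans hlt j.isLt⟩ with hu
    have h1 : f j0 < f u := hf (by rw [Fin.lt_def]; simp [hu])
    have h2' : f u < f j := hf (by rw [Fin.lt_def]; simpa [hu] using hlt)
    rw [hj0] at h1; rw [hj] at h2'
    rw [Fin.lt_def] at h1 h2'; omega
  have hpos2 : (j2 : ℕ) = (j : ℕ) + 1 := by
    by_contra hc
    have hlt : (j : ℕ) + 1 < (j2 : ℕ) := by
      have := (Fin.lt_def.mp hlt12); omega
    set u : Fin m := ⟨(j : ℕ) + 1, lt_trans hlt j2.isLt⟩ with hu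
    have h1 : f j < f u := hf (by rw [Fin.lt_def]; simp [hu])
    have h2' : f u < f j2 := hf (by rw [Fin.lt_def]; simpa [hu] using hlt)
    rw [hj] at h1; rw [hj2] at h2'
    rw [Fin.lt_def] at h1 h2'; omega
  have hz01 : z j0 < z j := by
    rw [hpat j0 j, hj0, hj, Fin.lt_def]; omega
  have hz12 : z j < z j2 := by
    rw [hpat j j2, hj, hj2, Fin.lt_def]; omega
  have hval1 : (z j : ℕ) = (z j0 : ℕ) + 1 := by
    by_contra hc
    have hlt : (z j0 : ℕ) + 1 < (z j : ℕ) := by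
      have := Fin.lt_def.mp hz01; omega
    set w : Fin m := ⟨(z j0 : ℕ) + 1, lt_trans hlt (z j).isLt⟩ with hw
    set u : Fin m := z.symm w with hu
    have hzu : z u = w := z.apply_symm_apply w
    have h1 : π (f j0) < π (f u) := (hpat j0 u).mp (by rw [hzu, Fin.lt_def]; simp [hw])
    have h2' : π (f u) < π (f j) := (hpat u j).mp (by rw [hzu, Fin.lt_def]; simpa [hw] using hlt)
    rw [hj0] at h1; rw [hj] at h2'
    rw [Fin.lt_def] at h1 h2'; omega
  have hval2 : (z j2 : ℕ) = (z j : ℕ) + 1 := by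
    by_contra hc
    have hlt : (z j : ℕ) + 1 < (z j2 : ℕ) := by
      have := Fin.lt_def.mp hz12; omega
    set w : Fin m := ⟨(z j : ℕ) + 1, lt_trans hlt (z j2).isLt⟩ with hw
    set u : Fin m := z.symm w with hu
    have hzu : z u = w := z.apply_symm_apply w
    have h1 : π (f j) < π (f u) := (hpat j u).mp (by rw [hzu, Fin.lt_def]; simp [hw])
    have h2' : π (f u) < π (f j2) := (hpat u j2).mp (by rw [hzu, Fin.lt_def]; simpa [hw] using hlt)
    rw [hj] at h1; rw [hj2] at h2'
    rw [Fin.lt_def] at h1 h2'; omega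
  apply hz
  have hm1 : (j0 : ℕ) + 1 < m := by have := j.isLt; omega
  have hm2 : (j0 : ℕ) + 1 + 1 < m := by have := j2.isLt; omega
  refine ⟨(j0 : ℕ), ⟨hm1, ?_⟩, ⟨hm2, ?_⟩⟩
  · have e1 : (⟨(j0 : ℕ) + 1, hm1⟩ : Fin m) = j := Fin.ext (by simpa using hpos1.symm)
    have e0 : (⟨(j0 : ℕ), Nat.lt_of_succ_lt hm1⟩ : Fin m) = j0 := Fin.ext rfl
    rw [e1, e0]; exact hval1
  · have e2 : (⟨(j0 : ℕ) + 1 + 1, hm2⟩ : Fin m) = j2 := Fin.ext (by simp; omega)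
    have e1 : (⟨(j0 : ℕ) + 1, Nat.lt_of_succ_lt hm2⟩ : Fin m) = j := Fin.ext (by simpa using hpos1.symm)
    rw [e2, e1]; exact hval2

set_option maxHeartbeats 2000000 in
lemma mobius_aux (mu : PermWord → PermWord → ℤ)
    (hrec : ∀ σ π : PermWord, PatLT σ π →
      mu σ π = - ∑ m ∈ Finset.range (π.1 + 1), ∑ z : Equiv.Perm (Fin m),
        if PatLE σ ⟨m, z⟩ ∧ PatLT ⟨m, z⟩ π then mu σ ⟨m, z⟩ else 0) :
    ∀ n : ℕ, ∀ π : Equiv.Perm (Fin n), (∃ i, adjAt π i ∧ adjAt π (i + 1)) →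
      mu permOne ⟨n, π⟩ = 0 := by
  intro n
  induction n using Nat.strong_induction_on with
  | _ n IH => ?_
  intro π h
  obtain ⟨i, hA, hB⟩ := h
  obtain ⟨h2, hv1⟩ := hA
  obtain ⟨h3, hv2⟩ := hB
  obtain ⟨k, rfl⟩ : ∃ k, n = k + 1 := ⟨n - 1, by omega⟩
  have hk2 : 2 ≤ k := by omega
  set I0 : Fin (k+1) := ⟨i, by omega⟩ with hI0def
  set I1 : Fin (k+1) := ⟨i+1, by omega⟩ with hI1def
  set I2 : Fin (k+1) := ⟨i+2, by omega⟩ with hI2def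
  have hv1' : (π I1 : ℕ) = (π I0 : ℕ) + 1 := hv1
  have hv2' : (π I2 : ℕ) = (π I1 : ℕ) + 1 := hv2
  let π' : Equiv.Perm (Fin k) := delPerm π I1
  -- the two recursions
  have hlt_pi : PatLT permOne ⟨k+1, π⟩ := by
    refine ⟨permOne_le (by omega) π, ?_⟩
    intro hE
    have := congrArg Sigma.fst hE
    simp only [permOne] at this
    omega
  have recπ := hrec _ _ hlt_pi
  have hlt_pi' : PatLT permOne ⟨k, π'⟩ := by
    refine ⟨permOne_le (by omega) π', ?_⟩
    intro hE
    have := congrArg Sigma.fst hE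
    simp only [permOne] at this
    omega
  have recπ' := hrec _ _ hlt_pi'
  -- key equivalence for triple-free z
  have hkey : ∀ (m : ℕ) (z : Equiv.Perm (Fin m)), ¬ (∃ j, adjAt z j ∧ adjAt z (j+1)) →
      ((PatLE permOne ⟨m,z⟩ ∧ PatLT ⟨m,z⟩ ⟨k+1,π⟩) ↔
        (PatLE permOne ⟨m,z⟩ ∧ PatLE ⟨m,z⟩ ⟨k,π'⟩)) := by
    intro m z hz
    constructor
    · rintro ⟨ho, hle, -⟩
      refine ⟨ho, ?_⟩
      obtain ⟨f, hf, hpat⟩ := hle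
      obtain ⟨f', hf', hpat', havoid⟩ :=
        occurrence_modify π I0 I1 I2 rfl rfl hv1' hv2' z hz f hf hpat
      exact occurs_del_of_occurs_avoid f' hf' hpat' havoid
    · rintro ⟨ho, hle⟩
      have hm : m ≤ k := occurs_card_le hle
      refine ⟨ho, occurs_of_occurs_del hle, ?_⟩
      intro hE
      have := congrArg Sigma.fst hE
      simp only at this
      omega
  -- step 1 : the sum for π equals the closed sum for π'
  have hAB : (∑ m ∈ Finset.range (k+1+1), ∑ z : Equiv.Perm (Fin m),
        if PatLE permOne ⟨m, z⟩ ∧ PatLT ⟨m, z⟩ ⟨k+1, π⟩ then mu permOne ⟨m, z⟩ else 0)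
      = (∑ m ∈ Finset.range (k+1+1), ∑ z : Equiv.Perm (Fin m),
        if PatLE permOne ⟨m, z⟩ ∧ PatLE ⟨m, z⟩ ⟨k, π'⟩ then mu permOne ⟨m, z⟩ else 0) := by
    refine Finset.sum_congr rfl (fun m hm => Finset.sum_congr rfl (fun z _ => ?_))
    by_cases htf : ∃ j, adjAt z j ∧ adjAt z (j+1)
    · trans (0 : ℤ)
      · by_cases hc : PatLE permOne ⟨m, z⟩ ∧ PatLT ⟨m, z⟩ ⟨k+1, π⟩
        · rw [if_pos hc]
          rcases Nat.lt_or_ge m (k+1) with hmlt | hmge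
          · exact IH m hmlt z htf
          · exfalso
            have hmle : m ≤ k+1 := occurs_card_le hc.2.1
            have hmk : m = k+1 := le_antisymm hmle hmge
            subst hmk
            exact hc.2.2 (congrArg (fun w => (⟨k+1, w⟩ : PermWord)) (eq_of_occurs_self hc.2.1))
        · rw [if_neg hc]
      · by_cases hc : PatLE permOne ⟨m, z⟩ ∧ PatLE ⟨m, z⟩ ⟨k, π'⟩
        · rw [if_pos hc]
          have hmle : m ≤ k := occurs_card_le hc.2
          exact (IH m (by omega) z htf).symm
        · rw [if_neg hc]
    · have hiff := hkey m z htf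
      by_cases hc : PatLE permOne ⟨m, z⟩ ∧ PatLT ⟨m, z⟩ ⟨k+1, π⟩
      · rw [if_pos hc, if_pos (hiff.mp hc)]
      · rw [if_neg hc, if_neg (fun hcb => hc (hiff.mpr hcb))]
  -- step 2 : the closed sum for π' is zero
  have hB0 : (∑ m ∈ Finset.range (k+1+1), ∑ z : Equiv.Perm (Fin m),
        if PatLE permOne ⟨m, z⟩ ∧ PatLE ⟨m, z⟩ ⟨k, π'⟩ then mu permOne ⟨m, z⟩ else 0) = 0 := by
    rw [Finset.sum_range_succ]
    have hlast : (∑ z : Equiv.Perm (Fin (k+1)),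
        if PatLE permOne ⟨k+1, z⟩ ∧ PatLE ⟨k+1, z⟩ ⟨k, π'⟩ then mu permOne ⟨k+1, z⟩ else 0) = 0 := by
      refine Finset.sum_eq_zero (fun z _ => ?_)
      rw [if_neg]
      rintro ⟨-, hle⟩
      have hcard : k + 1 ≤ k := occurs_card_le hle
      omega
    rw [hlast, add_zero]
    -- split off the top element
    have hsplit : ∀ (m : ℕ) (z : Equiv.Perm (Fin m)),
        (if PatLE permOne ⟨m, z⟩ ∧ PatLE ⟨m, z⟩ ⟨k, π'⟩ then mu permOne ⟨m, z⟩ else 0)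
        = (if PatLE permOne ⟨m, z⟩ ∧ PatLT ⟨m, z⟩ ⟨k, π'⟩ then mu permOne ⟨m, z⟩ else 0)
          + (if (⟨m, z⟩ : PermWord) = ⟨k, π'⟩ then mu permOne ⟨m, z⟩ else 0) := by
      intro m z
      by_cases he : (⟨m, z⟩ : PermWord) = ⟨k, π'⟩
      · have hc : PatLE permOne ⟨m, z⟩ ∧ PatLE ⟨m, z⟩ ⟨k, π'⟩ := by
          constructor
          · rw [he]; exact permOne_le (by omega) π'
          · rw [he]; exact occurs_refl π'
        rw [if_pos hc, if_pos he, if_neg (fun hc1 => hc1.2.2 he)]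
        ring
      · rw [if_neg he]
        by_cases hc : PatLE permOne ⟨m, z⟩ ∧ PatLE ⟨m, z⟩ ⟨k, π'⟩
        · rw [if_pos hc, if_pos ⟨hc.1, hc.2, he⟩]; ring
        · rw [if_neg hc, if_neg (fun h1 => hc ⟨h1.1, h1.2.1⟩)]; ring
    have : (∑ m ∈ Finset.range (k+1), ∑ z : Equiv.Perm (Fin m),
          if PatLE permOne ⟨m, z⟩ ∧ PatLE ⟨m, z⟩ ⟨k, π'⟩ then mu permOne ⟨m, z⟩ else 0)
        = (∑ m ∈ Finset.range (k+1), ∑ z : Equiv.Perm (Fin m),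
          if PatLE permOne ⟨m, z⟩ ∧ PatLT ⟨m, z⟩ ⟨k, π'⟩ then mu permOne ⟨m, z⟩ else 0)
          + (∑ m ∈ Finset.range (k+1), ∑ z : Equiv.Perm (Fin m),
          if (⟨m, z⟩ : PermWord) = ⟨k, π'⟩ then mu permOne ⟨m, z⟩ else 0) := by
      rw [← Finset.sum_add_distrib]
      refine Finset.sum_congr rfl (fun m _ => ?_)
      rw [← Finset.sum_add_distrib]
      exact Finset.sum_congr rfl (fun z _ => hsplit m z)
    rw [this]
    have htop : (∑ m ∈ Finset.range (k+1), ∑ z : Equiv.Perm (Fin m),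
        if (⟨m, z⟩ : PermWord) = ⟨k, π'⟩ then mu permOne ⟨m, z⟩ else 0)
        = mu permOne ⟨k, π'⟩ := by
      rw [Finset.sum_eq_single_of_mem k (Finset.self_mem_range_succ k)]
      · rw [Finset.sum_eq_single_of_mem π' (Finset.mem_univ π')]
        · rw [if_pos rfl]
        · intro z _ hz
          rw [if_neg]
          intro hE
          apply hz
          have := (Sigma.mk.inj_iff.mp hE).2
          exact eq_of_heq this
      · intro b _ hb
        refine Finset.sum_eq_zero (fun z _ => ?_)
        rw [if_neg]
        intro hE
        exact hb (congrArg Sigma.fst hE)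
    rw [htop]
    have hfirst : (∑ m ∈ Finset.range (k+1), ∑ z : Equiv.Perm (Fin m),
        if PatLE permOne ⟨m, z⟩ ∧ PatLT ⟨m, z⟩ ⟨k, π'⟩ then mu permOne ⟨m, z⟩ else 0)
        = - mu permOne ⟨k, π'⟩ := by
      rw [recπ']
      ring
    rw [hfirst]
    ring
  rw [recπ, hAB, hB0]
  ring

/-- If `π` contains a triple adjacency then μ(1, π) = 0. -/
theorem mobius_eq_zero_of_triple_adjacency (mu : PermWord → PermWord → ℤ)
    (hmu : IsMobius mu) {n : ℕ} (π : Equiv.Perm (Fin n))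
    (h : ∃ i, adjAt π i ∧ adjAt π (i + 1)) :
    mu permOne ⟨n, π⟩ = 0 :=
  mobius_aux mu hmu.2.1 n π h
end

section
/- If a permutation π contains a monotone (increasing or decreasing) adjacency of length k ≥ 3, that is, k consecutive positions whose values form k consecutive integers in increasing order or in decreasing order, then μ(12…(k−2), π) = 0 in the pattern containment poset. -/
open scoped Classical

namespace MobiusAux
open Equiv Finset

lemma fin_strictMono_id {n : ℕ} {f : Fin n → Fin n} (hf : StrictMono f) : f = id := by
  have hbij : Function.Bijective f := Finite.injective_iff_bijective.mp hf.injective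
  exact (StrictMono.range_inj hf strictMono_id).mp (by
    rw [Set.range_id, Set.range_eq_univ]; exact hbij.2)

lemma perm_eq_of_iff {n : ℕ} {z w : Equiv.Perm (Fin n)}
    (h : ∀ a b, z a < z b ↔ w a < w b) : z = w := by
  have hs : StrictMono (fun x => w (z.symm x)) := by
    intro x y hxy
    exact (h (z.symm x) (z.symm y)).mp (by simpa using hxy)
  have hid := fin_strictMono_id hs
  apply Equiv.ext
  intro a
  have := congrFun hid (z a)
  simpa using this.symm

lemma occurs_refl {n : ℕ} (z : Equiv.Perm (Fin n)) : Occurs z z :=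
  ⟨id, strictMono_id, fun _ _ => Iff.rfl⟩

lemma occurs_length_le {m n : ℕ} {σ : Equiv.Perm (Fin m)} {π : Equiv.Perm (Fin n)}
    (h : Occurs σ π) : m ≤ n := by
  obtain ⟨f, hf, -⟩ := h
  simpa using Fintype.card_le_of_injective f hf.injective

lemma occurs_trans {a b c : ℕ} {x : Equiv.Perm (Fin a)} {y : Equiv.Perm (Fin b)}
    {z : Equiv.Perm (Fin c)} (h1 : Occurs x y) (h2 : Occurs y z) : Occurs x z := by
  obtain ⟨f, hf, hf2⟩ := h1; obtain ⟨g, hg, hg2⟩ := h2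
  exact ⟨g ∘ f, hg.comp hf, fun a b => (hf2 a b).trans (hg2 _ _)⟩

lemma occurs_antisymm {n : ℕ} {z w : Equiv.Perm (Fin n)} (h : Occurs z w) : z = w := by
  obtain ⟨f, hf, hf2⟩ := h
  rw [fin_strictMono_id hf] at hf2
  exact perm_eq_of_iff (by simpa using hf2)


lemma delAux_inj {n : ℕ} (π : Equiv.Perm (Fin (n+1))) (p : Fin (n+1)) :
    Function.Injective (fun a : Fin n => π (p.succAbove a)) :=
  π.injective.comp (Fin.strictMono_succAbove p).injective

lemma delAux_card {n : ℕ} (π : Equiv.Perm (Fin (n+1))) (p : Fin (n+1)) :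
    (Finset.univ.image (fun a : Fin n => π (p.succAbove a))).card = n := by
  rw [Finset.card_image_of_injective _ (delAux_inj π p), Finset.card_univ, Fintype.card_fin]

noncomputable def delFun {n : ℕ} (π : Equiv.Perm (Fin (n+1))) (p : Fin (n+1)) :
    Fin n → Fin n :=
  fun a => ((Finset.univ.image (fun a : Fin n => π (p.succAbove a))).orderIsoOfFin
      (delAux_card π p)).symm
    ⟨π (p.succAbove a), Finset.mem_image_of_mem _ (Finset.mem_univ a)⟩

lemma delFun_lt_iff {n : ℕ} (π : Equiv.Perm (Fin (n+1))) (p : Fin (n+1)) (a b : Fin n) :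
    delFun π p a < delFun π p b ↔ π (p.succAbove a) < π (p.succAbove b) := by
  unfold delFun
  rw [OrderIso.lt_iff_lt, Subtype.mk_lt_mk]

lemma delFun_inj {n : ℕ} (π : Equiv.Perm (Fin (n+1))) (p : Fin (n+1)) :
    Function.Injective (delFun π p) := by
  intro a b hab
  by_contra hne
  have h1 : π (p.succAbove a) ≠ π (p.succAbove b) :=
    fun h => hne ((Fin.strictMono_succAbove p).injective (π.injective h))
  rcases h1.lt_or_gt with h | h
  · exact absurd hab (ne_of_lt ((delFun_lt_iff π p a b).mpr h))
  · exact absurd hab.symm (ne_of_lt ((delFun_lt_iff π p b a).mpr h))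

noncomputable def delPerm {n : ℕ} (π : Equiv.Perm (Fin (n+1))) (p : Fin (n+1)) :
    Equiv.Perm (Fin n) :=
  Equiv.ofBijective _ (Finite.injective_iff_bijective.mp (delFun_inj π p))

lemma delPerm_lt_iff {n : ℕ} (π : Equiv.Perm (Fin (n+1))) (p : Fin (n+1)) (a b : Fin n) :
    delPerm π p a < delPerm π p b ↔ π (p.succAbove a) < π (p.succAbove b) := by
  simpa [delPerm] using delFun_lt_iff π p a b

lemma occurs_delPerm {n : ℕ} (π : Equiv.Perm (Fin (n+1))) (p : Fin (n+1)) :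
    Occurs (delPerm π p) π :=
  ⟨p.succAbove, Fin.strictMono_succAbove p, fun a b => delPerm_lt_iff π p a b⟩

lemma occurs_of_avoid {m n : ℕ} {z : Equiv.Perm (Fin m)} {π : Equiv.Perm (Fin (n+1))}
    {p : Fin (n+1)} (f : Fin m → Fin (n+1)) (hf : StrictMono f)
    (hiff : ∀ a b, z a < z b ↔ π (f a) < π (f b)) (hp : ∀ a, f a ≠ p) :
    Occurs z (delPerm π p) := by
  choose g hg using fun a => Fin.exists_succAbove_eq (hp a)
  refine ⟨g, ?_, ?_⟩
  · intro a b hab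
    have h2 := hf hab
    rw [← hg a, ← hg b] at h2
    exact Fin.succAbove_lt_succAbove_iff.mp h2
  · intro a b
    rw [delPerm_lt_iff, hg a, hg b]
    exact hiff a b

lemma nat_succAbove_coe {n : ℕ} (p : Fin (n+1)) (a : Fin n) :
    (p.succAbove a : ℕ) = if (a : ℕ) < (p : ℕ) then (a : ℕ) else (a : ℕ) + 1 := by
  rcases lt_or_ge (a : ℕ) (p : ℕ) with h | h
  · rw [Fin.succAbove_of_castSucc_lt _ _ (by simpa [Fin.lt_def] using h), if_pos h,
      Fin.coe_castSucc]
  · rw [Fin.succAbove_of_le_castSucc _ _ (by simpa [Fin.le_def] using h),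
      if_neg (not_lt.mpr h), Fin.val_succ]


lemma adj_lt_iff {n : ℕ} {π : Equiv.Perm (Fin (n+1))} {r : ℕ} (hr : r + 1 < n + 1)
    (hr0 : r < n + 1) (hadj : adjAt π r ∨ adjAtDesc π r) (y : Fin (n+1))
    (hy1 : (y : ℕ) ≠ r) (hy2 : (y : ℕ) ≠ r + 1) :
    (π ⟨r, hr0⟩ < π y ↔ π ⟨r+1, hr⟩ < π y) ∧ (π y < π ⟨r, hr0⟩ ↔ π y < π ⟨r+1, hr⟩) := by
  have e1 : (π y : ℕ) ≠ (π (⟨r, hr0⟩ : Fin (n+1)) : ℕ) := by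
    intro hcon
    exact hy1 (congrArg Fin.val (π.injective (Fin.val_injective hcon)))
  have e2 : (π y : ℕ) ≠ (π (⟨r+1, hr⟩ : Fin (n+1)) : ℕ) := by
    intro hcon
    exact hy2 (congrArg Fin.val (π.injective (Fin.val_injective hcon)))
  rcases hadj with hv | hv
  · obtain ⟨h', hv⟩ := hv
    have hv' : (π (⟨r+1, hr⟩ : Fin (n+1)) : ℕ) = (π (⟨r, hr0⟩ : Fin (n+1)) : ℕ) + 1 := hv
    simp only [Fin.lt_def]
    omega
  · obtain ⟨h', hv⟩ := hv
    have hv' : (π (⟨r, hr0⟩ : Fin (n+1)) : ℕ) = (π (⟨r+1, hr⟩ : Fin (n+1)) : ℕ) + 1 := hv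
    simp only [Fin.lt_def]
    omega

lemma delPerm_step {n : ℕ} (π : Equiv.Perm (Fin (n+1))) (r : ℕ) (hr : r + 1 < n + 1)
    (hadj : adjAt π r ∨ adjAtDesc π r) :
    delPerm π ⟨r+1, hr⟩ = delPerm π ⟨r, Nat.lt_of_succ_lt hr⟩ := by
  have hr0 : r < n + 1 := Nat.lt_of_succ_lt hr
  apply perm_eq_of_iff
  intro a b
  rw [delPerm_lt_iff, delPerm_lt_iff]
  have hsa : ∀ x : Fin n, (x : ℕ) ≠ r →
      (⟨r+1, hr⟩ : Fin (n+1)).succAbove x = (⟨r, hr0⟩ : Fin (n+1)).succAbove x := by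
    intro x hx
    apply Fin.val_injective
    rw [nat_succAbove_coe, nat_succAbove_coe]
    split_ifs <;> simp_all <;> omega
  have hval : ∀ x : Fin n, (x : ℕ) = r →
      (⟨r+1, hr⟩ : Fin (n+1)).succAbove x = (⟨r, hr0⟩ : Fin (n+1)) ∧
      (⟨r, hr0⟩ : Fin (n+1)).succAbove x = (⟨r+1, hr⟩ : Fin (n+1)) := by
    intro x hx
    constructor <;>
      (apply Fin.val_injective; rw [nat_succAbove_coe]; split_ifs <;> simp_all <;> omega)
  have hyv : ∀ x : Fin n, (x : ℕ) ≠ r →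
      ((⟨r, hr0⟩ : Fin (n+1)).succAbove x : ℕ) ≠ r ∧
      ((⟨r, hr0⟩ : Fin (n+1)).succAbove x : ℕ) ≠ r + 1 := by
    intro x hx
    rw [nat_succAbove_coe]
    constructor <;> (split_ifs <;> simp_all <;> omega)
  by_cases ha : (a : ℕ) = r <;> by_cases hb : (b : ℕ) = r
  · have hab : a = b := Fin.val_injective (ha.trans hb.symm)
    subst hab
    simp
  · rw [(hval a ha).1, (hval a ha).2, hsa b hb]
    exact (adj_lt_iff hr hr0 hadj _ (hyv b hb).1 (hyv b hb).2).1
  · rw [(hval b hb).1, (hval b hb).2, hsa a ha]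
    exact (adj_lt_iff hr hr0 hadj _ (hyv a ha).1 (hyv a ha).2).2
  · rw [hsa a ha, hsa b hb]

lemma delPerm_run {n : ℕ} (π : Equiv.Perm (Fin (n+1))) (i K : ℕ)
    (hadj : ∀ j, j < K → (adjAt π (i+j) ∨ adjAtDesc π (i+j))) :
    ∀ t, t ≤ K → ∀ (h1 : i + t < n + 1) (h2 : i < n + 1),
      delPerm π ⟨i + t, h1⟩ = delPerm π ⟨i, h2⟩ := by
  intro t
  induction t with
  | zero => intro _ h1 h2; rfl
  | succ t IH =>
    intro ht h1 h2
    have hstep := delPerm_step π (i + t) h1 (hadj t (by omega))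
    exact hstep.trans (IH (by omega) (by omega) h2)


def HasRun (K : ℕ) {m : ℕ} (z : Equiv.Perm (Fin m)) : Prop :=
  ∃ i, (∀ j, j < K → adjAt z (i + j)) ∨ (∀ j, j < K → adjAtDesc z (i + j))

lemma not_hasRun_small {m K : ℕ} (hK : 1 ≤ K) (hmK : m ≤ K) (z : Equiv.Perm (Fin m)) :
    ¬ HasRun K z := by
  rintro ⟨i, h | h⟩
  · obtain ⟨hb, -⟩ := h (K-1) (by omega)
    omega
  · obtain ⟨hb, -⟩ := h (K-1) (by omega)
    omega

lemma between {m : ℕ} (z : Equiv.Perm (Fin m)) (u v : Fin m) (hlt : z u < z v)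
    (hno : ∀ c : Fin m, z u < z c → z c < z v → False) : (z v : ℕ) = (z u : ℕ) + 1 := by
  by_contra hne
  have h1 : (z u : ℕ) + 1 < (z v : ℕ) := by
    have := Fin.lt_def.mp hlt; omega
  have hw : (z u : ℕ) + 1 < m := lt_trans h1 (z v).isLt
  refine hno (z.symm ⟨(z u : ℕ) + 1, hw⟩) ?_ ?_
  · rw [Equiv.apply_symm_apply]
    exact Fin.lt_def.mpr (by simp only [Fin.val_mk]; omega)
  · rw [Equiv.apply_symm_apply]
    exact Fin.lt_def.mpr (by simp only [Fin.val_mk]; exact h1)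

lemma hasRun_of_hits {n m : ℕ} {π : Equiv.Perm (Fin (n+1))} {z : Equiv.Perm (Fin m)}
    {i K : ℕ} (hK : 1 ≤ K)
    (hrun : (∀ j, j < K → adjAt π (i + j)) ∨ (∀ j, j < K → adjAtDesc π (i + j)))
    (hiK : i + K < n + 1)
    (f : Fin m → Fin (n+1)) (hf : StrictMono f)
    (hiff : ∀ a b, z a < z b ↔ π (f a) < π (f b))
    (hall : ∀ t, t ≤ K → ∃ a, (f a : ℕ) = i + t) :
    HasRun K z := by
  obtain ⟨a0, ha0⟩ := hall 0 (by omega)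
  have claim : ∀ t, t ≤ K → ∃ h : (a0 : ℕ) + t < m, (f ⟨(a0 : ℕ) + t, h⟩ : ℕ) = i + t := by
    intro t
    induction t with
    | zero =>
      intro _
      exact ⟨a0.isLt, ha0⟩
    | succ t IH =>
      intro ht
      obtain ⟨hA, hfA⟩ := IH (by omega)
      obtain ⟨b, hb⟩ := hall (t+1) ht
      have hAb : (a0 : ℕ) + t < (b : ℕ) := by
        have h2 := hf.lt_iff_lt (a := ⟨(a0 : ℕ) + t, hA⟩) (b := b)
        rw [Fin.lt_def, Fin.lt_def, hfA, hb] at h2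
        simp only [Fin.val_mk] at h2
        omega
      have hnb : ¬ ((a0 : ℕ) + t + 1 < (b : ℕ)) := by
        intro hcon
        have hcm : (a0 : ℕ) + t + 1 < m := lt_trans hcon b.isLt
        have l1 := hf.lt_iff_lt (a := ⟨(a0 : ℕ) + t, hA⟩) (b := ⟨(a0 : ℕ) + t + 1, hcm⟩)
        have l2 := hf.lt_iff_lt (a := ⟨(a0 : ℕ) + t + 1, hcm⟩) (b := b)
        rw [Fin.lt_def, Fin.lt_def, hfA] at l1
        rw [Fin.lt_def, Fin.lt_def, hb] at l2
        simp only [Fin.val_mk] at l1 l2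
        omega
      have hbm : (a0 : ℕ) + (t+1) < m := by omega
      have hbe : (⟨(a0 : ℕ) + (t+1), hbm⟩ : Fin m) = b :=
        Fin.val_injective (by simp only [Fin.val_mk]; omega)
      exact ⟨hbm, by rw [hbe]; exact hb⟩
  refine ⟨(a0 : ℕ), ?_⟩
  rcases hrun with hrun | hrun
  · left
    intro j hj
    obtain ⟨hA, hfA⟩ := claim j (by omega)
    obtain ⟨hB, hfB⟩ := claim (j+1) (by omega)
    have hij : i + j < n + 1 := by omega
    have hij1 : i + (j+1) < n + 1 := by omega
    obtain ⟨hc, hv⟩ := hrun j hj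
    have e1 : π (f ⟨(a0 : ℕ) + j, hA⟩) = π ⟨i + j, hij⟩ :=
      congrArg π (Fin.val_injective hfA)
    have e2 : π (f ⟨(a0 : ℕ) + (j+1), hB⟩) = π ⟨i + (j+1), hij1⟩ :=
      congrArg π (Fin.val_injective hfB)
    have hv' : (π (⟨i + (j+1), hij1⟩ : Fin (n+1)) : ℕ)
        = (π (⟨i + j, hij⟩ : Fin (n+1)) : ℕ) + 1 := hv
    have hAB : z ⟨(a0 : ℕ) + j, hA⟩ < z ⟨(a0 : ℕ) + (j+1), hB⟩ := by
      rw [hiff, e1, e2]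
      exact Fin.lt_def.mpr (by omega)
    have hval : (z (⟨(a0 : ℕ) + (j+1), hB⟩ : Fin m) : ℕ)
        = (z (⟨(a0 : ℕ) + j, hA⟩ : Fin m) : ℕ) + 1 := by
      apply between z _ _ hAB
      intro c h1 h2
      rw [hiff, e1] at h1
      rw [hiff, e2] at h2
      rw [Fin.lt_def] at h1 h2
      omega
    exact ⟨by omega, hval⟩
  · right
    intro j hj
    obtain ⟨hA, hfA⟩ := claim j (by omega)
    obtain ⟨hB, hfB⟩ := claim (j+1) (by omega)
    have hij : i + j < n + 1 := by omega
    have hij1 : i + (j+1) < n + 1 := by omega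
    obtain ⟨hc, hv⟩ := hrun j hj
    have e1 : π (f ⟨(a0 : ℕ) + j, hA⟩) = π ⟨i + j, hij⟩ :=
      congrArg π (Fin.val_injective hfA)
    have e2 : π (f ⟨(a0 : ℕ) + (j+1), hB⟩) = π ⟨i + (j+1), hij1⟩ :=
      congrArg π (Fin.val_injective hfB)
    have hv' : (π (⟨i + j, hij⟩ : Fin (n+1)) : ℕ)
        = (π (⟨i + (j+1), hij1⟩ : Fin (n+1)) : ℕ) + 1 := hv
    have hBA : z ⟨(a0 : ℕ) + (j+1), hB⟩ < z ⟨(a0 : ℕ) + j, hA⟩ := by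
      rw [hiff, e1, e2]
      exact Fin.lt_def.mpr (by omega)
    have hval : (z (⟨(a0 : ℕ) + j, hA⟩ : Fin m) : ℕ)
        = (z (⟨(a0 : ℕ) + (j+1), hB⟩ : Fin m) : ℕ) + 1 := by
      apply between z _ _ hBA
      intro c h1 h2
      rw [hiff, e2] at h1
      rw [hiff, e1] at h2
      rw [Fin.lt_def] at h1 h2
      omega
    exact ⟨by omega, hval⟩

lemma occurs_del_of_not_hasRun {n m : ℕ} {π : Equiv.Perm (Fin (n+1))}
    {z : Equiv.Perm (Fin m)} {i K : ℕ} (hK : 1 ≤ K)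
    (hrun : (∀ j, j < K → adjAt π (i + j)) ∨ (∀ j, j < K → adjAtDesc π (i + j)))
    (hiK : i + K < n + 1) (hi : i < n + 1)
    (hz : ¬ HasRun K z) (hocc : Occurs z π) :
    Occurs z (delPerm π ⟨i, hi⟩) := by
  obtain ⟨f, hf, hiff⟩ := hocc
  by_cases hall : ∀ t, t ≤ K → ∃ a, (f a : ℕ) = i + t
  · exact absurd (hasRun_of_hits hK hrun hiK f hf hiff hall) hz
  · push_neg at hall
    obtain ⟨t, ht, hmiss⟩ := hall
    have hit : i + t < n + 1 := by omega
    have hp : ∀ a, f a ≠ (⟨i + t, hit⟩ : Fin (n+1)) := by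
      intro a hcon
      exact hmiss a (by rw [hcon])
    have h1 : Occurs z (delPerm π ⟨i + t, hit⟩) := occurs_of_avoid f hf hiff hp
    have hadj : ∀ j, j < K → (adjAt π (i+j) ∨ adjAtDesc π (i+j)) := fun j hj =>
      hrun.elim (fun h => Or.inl (h j hj)) (fun h => Or.inr (h j hj))
    rw [delPerm_run π i K hadj t ht hit hi] at h1
    exact h1


lemma main_core (mu : PermWord → PermWord → ℤ) (hmu : IsMobius mu) (k N' : ℕ) (hk : 3 ≤ k)
    (π : Equiv.Perm (Fin (N'+1))) (πm : Equiv.Perm (Fin N'))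
    (IH : ∀ m', m' < N' + 1 → ∀ z : Equiv.Perm (Fin m'),
      HasRun (k-1) z → mu ⟨k-2, 1⟩ ⟨m', z⟩ = 0)
    (hσπ : PatLE ⟨k-2, 1⟩ ⟨N'+1, π⟩)
    (hkN : k - 2 < N')
    (keyz : ∀ (m' : ℕ) (z : Equiv.Perm (Fin m')),
      ¬ HasRun (k-1) z → Occurs z π → Occurs z πm)
    (hπmπ : Occurs πm π) :
    mu ⟨k-2, 1⟩ ⟨N'+1, π⟩ = 0 := by
  have hσπm : Occurs (1 : Equiv.Perm (Fin (k-2))) πm :=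
    keyz _ _ (not_hasRun_small (by omega) (by omega) _) hσπ
  have hlt1 : PatLT ⟨k-2, 1⟩ ⟨N'+1, π⟩ := by
    refine ⟨hσπ, fun he => ?_⟩
    have h2 := (Sigma.mk.inj_iff.mp he).1
    omega
  have hlt2 : PatLT ⟨k-2, 1⟩ ⟨N', πm⟩ := by
    refine ⟨hσπm, fun he => ?_⟩
    have h2 := (Sigma.mk.inj_iff.mp he).1
    omega
  have Eπ : mu ⟨k-2, 1⟩ ⟨N'+1, π⟩
      = - ∑ m' ∈ Finset.range (N'+1+1), ∑ z : Equiv.Perm (Fin m'),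
          if PatLE ⟨k-2, 1⟩ ⟨m', z⟩ ∧ PatLT ⟨m', z⟩ ⟨N'+1, π⟩
          then mu ⟨k-2, 1⟩ ⟨m', z⟩ else 0 :=
    hmu.2.1 _ _ hlt1
  have Eπm : mu ⟨k-2, 1⟩ ⟨N', πm⟩
      = - ∑ m' ∈ Finset.range (N'+1), ∑ z : Equiv.Perm (Fin m'),
          if PatLE ⟨k-2, 1⟩ ⟨m', z⟩ ∧ PatLT ⟨m', z⟩ ⟨N', πm⟩
          then mu ⟨k-2, 1⟩ ⟨m', z⟩ else 0 :=
    hmu.2.1 _ _ hlt2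
  rw [Eπ, neg_eq_zero]
  have hstep : ∀ m' ∈ Finset.range (N'+1+1), ∀ z : Equiv.Perm (Fin m'),
      (if PatLE ⟨k-2, 1⟩ ⟨m', z⟩ ∧ PatLT ⟨m', z⟩ ⟨N'+1, π⟩
        then mu ⟨k-2, 1⟩ ⟨m', z⟩ else 0)
      = (if PatLE ⟨k-2, 1⟩ ⟨m', z⟩ ∧ PatLE ⟨m', z⟩ ⟨N', πm⟩
        then mu ⟨k-2, 1⟩ ⟨m', z⟩ else 0) := by
    intro m' hm' z
    rcases Nat.lt_or_ge m' (N'+1) with hm | hm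
    · by_cases hr : HasRun (k-1) z
      · rw [IH m' hm z hr]
        simp
      · refine if_congr ?_ rfl rfl
        constructor
        · rintro ⟨h1, h2, -⟩
          exact ⟨h1, keyz _ z hr h2⟩
        · rintro ⟨h1, h2⟩
          refine ⟨h1, occurs_trans h2 hπmπ, fun he => ?_⟩
          have h3 := (Sigma.mk.inj_iff.mp he).1
          have h4 : m' ≤ N' := occurs_length_le h2
          omega
    · have hm'e : m' = N' + 1 := by
        have := Finset.mem_range.mp hm'
        omega
      subst hm'e
      have c1 : ¬(PatLE ⟨k-2, 1⟩ ⟨N'+1, z⟩ ∧ PatLT ⟨N'+1, z⟩ ⟨N'+1, π⟩) := by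
        rintro ⟨-, h2, h3⟩
        exact h3 (congrArg (Sigma.mk (N'+1)) (occurs_antisymm h2))
      have c2 : ¬(PatLE ⟨k-2, 1⟩ ⟨N'+1, z⟩ ∧ PatLE ⟨N'+1, z⟩ ⟨N', πm⟩) := by
        rintro ⟨-, h2⟩
        have h5 : N' + 1 ≤ N' := occurs_length_le h2
        omega
      rw [if_neg c1, if_neg c2]
  rw [Finset.sum_congr rfl (fun m' hm' => Finset.sum_congr rfl (fun z _ => hstep m' hm' z))]
  rw [Finset.sum_range_succ]
  have hlast : (∑ z : Equiv.Perm (Fin (N'+1)),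
      if PatLE ⟨k-2, 1⟩ ⟨N'+1, z⟩ ∧ PatLE ⟨N'+1, z⟩ ⟨N', πm⟩
      then mu ⟨k-2, 1⟩ ⟨N'+1, z⟩ else 0) = 0 :=
    Finset.sum_eq_zero fun z _ => if_neg (fun hc => by
      have h5 : N' + 1 ≤ N' := occurs_length_le hc.2; omega)
  rw [hlast, add_zero]
  have hsplit : ∀ m' ∈ Finset.range (N'+1), ∀ z : Equiv.Perm (Fin m'),
      (if PatLE ⟨k-2, 1⟩ ⟨m', z⟩ ∧ PatLE ⟨m', z⟩ ⟨N', πm⟩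
        then mu ⟨k-2, 1⟩ ⟨m', z⟩ else 0)
      = (if PatLE ⟨k-2, 1⟩ ⟨m', z⟩ ∧ PatLT ⟨m', z⟩ ⟨N', πm⟩
          then mu ⟨k-2, 1⟩ ⟨m', z⟩ else 0)
        + (if (⟨m', z⟩ : PermWord) = ⟨N', πm⟩ then mu ⟨k-2, 1⟩ ⟨m', z⟩ else 0) := by
    intro m' hm' z
    by_cases he : (⟨m', z⟩ : PermWord) = (⟨N', πm⟩ : PermWord)
    · obtain ⟨he1, he2⟩ := Sigma.mk.inj_iff.mp he
      subst he1
      have hz : z = πm := eq_of_heq he2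
      subst hz
      have cpos : PatLE ⟨k-2, 1⟩ (⟨m', z⟩ : PermWord) ∧ PatLE (⟨m', z⟩ : PermWord) ⟨m', z⟩ :=
        ⟨hσπm, occurs_refl z⟩
      have cneg : ¬(PatLE ⟨k-2, 1⟩ (⟨m', z⟩ : PermWord) ∧ PatLT (⟨m', z⟩ : PermWord) ⟨m', z⟩) :=
        fun hc => hc.2.2 rfl
      rw [if_pos cpos, if_pos rfl, if_neg cneg, zero_add]
    · by_cases hc : PatLE ⟨k-2, 1⟩ ⟨m', z⟩ ∧ PatLE ⟨m', z⟩ ⟨N', πm⟩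
      · have hc2 : PatLE ⟨k-2, 1⟩ (⟨m', z⟩ : PermWord) ∧ PatLT (⟨m', z⟩ : PermWord) ⟨N', πm⟩ :=
          ⟨hc.1, hc.2, he⟩
        rw [if_neg he, if_pos hc, if_pos hc2, add_zero]
      · have hc2 : ¬(PatLE ⟨k-2, 1⟩ (⟨m', z⟩ : PermWord) ∧ PatLT (⟨m', z⟩ : PermWord) ⟨N', πm⟩) :=
          fun hx => hc ⟨hx.1, hx.2.1⟩
        rw [if_neg he, if_neg hc, if_neg hc2, add_zero]
  rw [Finset.sum_congr rfl (fun m' hm' => Finset.sum_congr rfl (fun z _ => hsplit m' hm' z))]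
  rw [Finset.sum_congr rfl
    (fun (m' : ℕ) (_ : m' ∈ Finset.range (N'+1)) => Finset.sum_add_distrib),
    Finset.sum_add_distrib]
  have hA : (∑ m' ∈ Finset.range (N'+1), ∑ z : Equiv.Perm (Fin m'),
      if PatLE ⟨k-2, 1⟩ ⟨m', z⟩ ∧ PatLT ⟨m', z⟩ ⟨N', πm⟩
      then mu ⟨k-2, 1⟩ ⟨m', z⟩ else 0)
      = - mu ⟨k-2, 1⟩ ⟨N', πm⟩ := by
    rw [Eπm, neg_neg]
  have hB : (∑ m' ∈ Finset.range (N'+1), ∑ z : Equiv.Perm (Fin m'),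
      if (⟨m', z⟩ : PermWord) = ⟨N', πm⟩ then mu ⟨k-2, 1⟩ ⟨m', z⟩ else 0)
      = mu ⟨k-2, 1⟩ ⟨N', πm⟩ := by
    rw [Finset.sum_eq_single_of_mem N' (Finset.self_mem_range_succ N')]
    · rw [Finset.sum_eq_single_of_mem πm (Finset.mem_univ πm)]
      · rw [if_pos rfl]
      · intro z' _ hzne
        have hne2 : ¬((⟨N', z'⟩ : PermWord) = ⟨N', πm⟩) :=
          fun he => hzne (eq_of_heq (Sigma.mk.inj_iff.mp he).2)
        exact if_neg hne2
    · intro m'' _ hne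
      refine Finset.sum_eq_zero fun z' _ => ?_
      have hne2 : ¬((⟨m'', z'⟩ : PermWord) = ⟨N', πm⟩) :=
        fun he => hne (Sigma.mk.inj_iff.mp he).1
      exact if_neg hne2
  rw [hA, hB, neg_add_cancel]

end MobiusAux

/-- If `π` contains a monotone adjacency of length `k ≥ 3`, then μ(12…(k−2), π) = 0. -/
theorem mobius_eq_zero_of_long_adjacency (mu : PermWord → PermWord → ℤ)
    (hmu : IsMobius mu) {n : ℕ} (π : Equiv.Perm (Fin n)) (k : ℕ) (hk : 3 ≤ k)
    (h : ∃ i, (∀ j, j < k - 1 → adjAt π (i + j)) ∨ (∀ j, j < k - 1 → adjAtDesc π (i + j))) :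
    mu ⟨k - 2, 1⟩ ⟨n, π⟩ = 0 := by
  suffices H : ∀ N : ℕ, ∀ (π : Equiv.Perm (Fin N)),
      (∃ i, (∀ j, j < k - 1 → adjAt π (i + j)) ∨ (∀ j, j < k - 1 → adjAtDesc π (i + j))) →
      mu ⟨k - 2, 1⟩ ⟨N, π⟩ = 0 by exact H n π h
  clear h π n
  intro N
  induction N using Nat.strong_induction_on with
  | _ N IH =>
  intro π hex
  obtain ⟨i, hrun⟩ := hex
  have hiK : i + (k-1) < N := by
    rcases hrun with h' | h'
    · obtain ⟨hb, -⟩ := h' (k-2) (by omega); omega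
    · obtain ⟨hb, -⟩ := h' (k-2) (by omega); omega
  obtain ⟨N', rfl⟩ : ∃ N', N = N' + 1 := ⟨N - 1, by omega⟩
  by_cases hσπ : PatLE ⟨k-2, 1⟩ ⟨N'+1, π⟩
  swap
  · exact hmu.2.2 _ _ hσπ
  have hi : i < N' + 1 := by omega
  refine MobiusAux.main_core mu hmu k N' hk π (MobiusAux.delPerm π ⟨i, hi⟩)
    (fun m' hm' z hz => IH m' hm' z hz) hσπ (by omega)
    (fun m' z hz hocc =>
      MobiusAux.occurs_del_of_not_hasRun (by omega) hrun hiK hi hz hocc)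
    (MobiusAux.occurs_delPerm π ⟨i, hi⟩)
end

section
/- A permutation π has at most one descent if and only if π avoids all three patterns 321, 2143, and 3142; equivalently, the class of permutations with at most one descent has basis {321, 2143, 3142}. -/
open scoped Classical

/-- The pattern 321. -/
def p321 : Equiv.Perm (Fin 3) := ⟨![2, 1, 0], ![2, 1, 0], by decide, by decide⟩

/-- The pattern 2143. -/
def p2143 : Equiv.Perm (Fin 4) := ⟨![1, 0, 3, 2], ![1, 0, 3, 2], by decide, by decide⟩

/-- The pattern 3142. -/
def p3142 : Equiv.Perm (Fin 4) := ⟨![2, 0, 3, 1], ![1, 3, 0, 2], by decide, by decide⟩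

lemma noDescRange {n : ℕ} (π : Equiv.Perm (Fin n)) (a : ℕ) :
    ∀ b : ℕ, ∀ hab : a ≤ b, ∀ hb : b < n, (∀ i, a ≤ i → i < b → ¬ descends π i) →
      π ⟨a, lt_of_le_of_lt hab hb⟩ ≤ π ⟨b, hb⟩ := by
  intro b
  induction b with
  | zero => intro hab hb _; exact le_of_eq (congrArg π (by ext; simp; omega))
  | succ b ih =>
    intro hab hb H
    rcases Nat.lt_or_ge a (b+1) with h | h
    · have hab' : a ≤ b := by omega
      have h1 := ih hab' (Nat.lt_of_succ_lt hb) (fun i hi hi' => H i hi (by omega))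
      refine le_trans h1 ?_
      have h2 := H b (by omega) (by omega)
      simp only [descends, not_exists] at h2
      exact le_of_not_gt (h2 hb)
    · exact le_of_eq (congrArg π (by ext; simp; omega))

lemma exists_descent {n : ℕ} (π : Equiv.Perm (Fin n)) {a b : Fin n}
    (hab : a < b) (h : π b < π a) : ∃ i, a.1 ≤ i ∧ i < b.1 ∧ descends π i := by
  by_contra hc
  push_neg at hc
  have := noDescRange π a.1 b.1 (le_of_lt hab) b.2 (fun i hi hi' => hc i hi hi')
  simp only [Fin.eta] at this
  exact absurd h (not_lt.mpr this)


lemma sm3 {n : ℕ} {x y z : Fin n} (h1 : x < y) (h2 : y < z) : StrictMono ![x, y, z] := by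
  intro i j hij
  fin_cases i <;> fin_cases j <;> simp_all <;> omega

lemma sm4 {n : ℕ} {w x y z : Fin n} (h1 : w < x) (h2 : x < y) (h3 : y < z) :
    StrictMono ![w, x, y, z] := by
  intro i j hij
  fin_cases i <;> fin_cases j <;> simp_all <;> omega

lemma occ321 {n : ℕ} (π : Equiv.Perm (Fin n)) {x y z : Fin n} (hxy : x < y) (hyz : y < z)
    (h1 : π y < π x) (h2 : π z < π y) : Occurs p321 π := by
  have h3 : π z < π x := h2.trans h1
  refine ⟨![x, y, z], sm3 hxy hyz, ?_⟩
  intro a b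
  fin_cases a <;> fin_cases b <;>
    simp only [Fin.zero_eta, Fin.mk_one, show ((⟨2, by norm_num⟩ : Fin 3)) = 2 from rfl,
      Matrix.cons_val_zero, Matrix.cons_val_one, Matrix.head_cons, Matrix.cons_val_two,
      Matrix.tail_cons] <;>
    first
      | exact iff_of_true (by decide) (by first | exact h1 | exact h2 | exact h3)
      | exact iff_of_false (by decide)
          (by first | exact lt_irrefl _ | exact asymm h1 | exact asymm h2 | exact asymm h3)

lemma occ2143 {n : ℕ} (π : Equiv.Perm (Fin n)) {w x y z : Fin n}
    (hwx : w < x) (hxy : x < y) (hyz : y < z)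
    (h1 : π x < π w) (h2 : π w < π z) (h3 : π z < π y) : Occurs p2143 π := by
  have e1 : π x < π z := h1.trans h2
  have e2 : π x < π y := e1.trans h3
  have e3 : π w < π y := h2.trans h3
  refine ⟨![w, x, y, z], sm4 hwx hxy hyz, ?_⟩
  intro a b
  fin_cases a <;> fin_cases b <;>
    simp only [Fin.zero_eta, Fin.mk_one, show ((⟨2, by norm_num⟩ : Fin 4)) = 2 from rfl,
      show ((⟨3, by norm_num⟩ : Fin 4)) = 3 from rfl,
      Matrix.cons_val_zero, Matrix.cons_val_one, Matrix.head_cons, Matrix.cons_val_two,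
      Matrix.cons_val_three, Matrix.tail_cons] <;>
    first
      | exact iff_of_true (by decide)
          (by first | exact h1 | exact h2 | exact h3 | exact e1 | exact e2 | exact e3)
      | exact iff_of_false (by decide)
          (by first | exact lt_irrefl _ | exact asymm h1 | exact asymm h2 | exact asymm h3 | exact asymm e1 | exact asymm e2 | exact asymm e3)

lemma occ3142 {n : ℕ} (π : Equiv.Perm (Fin n)) {w x y z : Fin n}
    (hwx : w < x) (hxy : x < y) (hyz : y < z)
    (h1 : π x < π z) (h2 : π z < π w) (h3 : π w < π y) : Occurs p3142 π := by
  have e1 : π x < π w := h1.trans h2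
  have e2 : π x < π y := e1.trans h3
  have e3 : π z < π y := h2.trans h3
  refine ⟨![w, x, y, z], sm4 hwx hxy hyz, ?_⟩
  intro a b
  fin_cases a <;> fin_cases b <;>
    simp only [Fin.zero_eta, Fin.mk_one, show ((⟨2, by norm_num⟩ : Fin 4)) = 2 from rfl,
      show ((⟨3, by norm_num⟩ : Fin 4)) = 3 from rfl,
      Matrix.cons_val_zero, Matrix.cons_val_one, Matrix.head_cons, Matrix.cons_val_two,
      Matrix.cons_val_three, Matrix.tail_cons] <;>
    first
      | exact iff_of_true (by decide)
          (by first | exact h1 | exact h2 | exact h3 | exact e1 | exact e2 | exact e3)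
      | exact iff_of_false (by decide)
          (by first | exact lt_irrefl _ | exact asymm h1 | exact asymm h2 | exact asymm h3 | exact asymm e1 | exact asymm e2 | exact asymm e3)

lemma twoDesc {n : ℕ} (π : Equiv.Perm (Fin n)) {a b c d : Fin n}
    (hab : a < b) (hcd : c < d) (hbc : b ≤ c)
    (h1 : π b < π a) (h2 : π d < π c) : 2 ≤ descentCount π := by
  obtain ⟨i, hai, hib, hi⟩ := exists_descent π hab h1
  obtain ⟨j, hcj, hjd, hj⟩ := exists_descent π hcd h2
  have hij : i < j := lt_of_lt_of_le hib (le_trans hbc hcj)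
  have hmem : ∀ k, descends π k → k ∈ (Finset.range n).filter fun i => descends π i := by
    intro k hk
    obtain ⟨hk1, -⟩ := id hk
    exact Finset.mem_filter.mpr ⟨Finset.mem_range.mpr (by omega), hk⟩
  exact Finset.one_lt_card.mpr ⟨i, hmem i hi, j, hmem j hj, by omega⟩


/-- `π` has at most one descent iff it avoids 321, 2143 and 3142. -/
theorem atMostOneDescent_iff_avoids {n : ℕ} (π : Equiv.Perm (Fin n)) :
    descentCount π ≤ 1 ↔ ¬ Occurs p321 π ∧ ¬ Occurs p2143 π ∧ ¬ Occurs p3142 π := by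
  constructor
  · intro hle
    refine ⟨?_, ?_, ?_⟩ <;> rintro ⟨f, hf, hiff⟩
    · have v1 : π (f 1) < π (f 0) := (hiff 1 0).mp (by decide)
      have v2 : π (f 2) < π (f 1) := (hiff 2 1).mp (by decide)
      have := twoDesc π (hf (by decide : (0:Fin 3) < 1)) (hf (by decide : (1:Fin 3) < 2))
        le_rfl v1 v2
      omega
    · have v1 : π (f 1) < π (f 0) := (hiff 1 0).mp (by decide)
      have v2 : π (f 3) < π (f 2) := (hiff 3 2).mp (by decide)
      have := twoDesc π (hf (by decide : (0:Fin 4) < 1)) (hf (by decide : (2:Fin 4) < 3))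
        (le_of_lt (hf (by decide : (1:Fin 4) < 2))) v1 v2
      omega
    · have v1 : π (f 1) < π (f 0) := (hiff 1 0).mp (by decide)
      have v2 : π (f 3) < π (f 2) := (hiff 3 2).mp (by decide)
      have := twoDesc π (hf (by decide : (0:Fin 4) < 1)) (hf (by decide : (2:Fin 4) < 3))
        (le_of_lt (hf (by decide : (1:Fin 4) < 2))) v1 v2
      omega
  · rintro ⟨hA, hB, hC⟩
    by_contra hle
    push_neg at hle
    obtain ⟨i, hi, j, hj, hij⟩ := Finset.one_lt_card.mp hle
    obtain ⟨-, di⟩ := Finset.mem_filter.mp hi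
    obtain ⟨-, dj⟩ := Finset.mem_filter.mp hj
    have main : ∀ i j : ℕ, descends π i → descends π j → i < j → False := ?_
    · rcases lt_or_gt_of_ne hij with h | h
      · exact main i j di dj h
      · exact main j i dj di h
    clear hi hj di dj hij i j
    intro i j di dj hlt
    obtain ⟨hi1, hdi⟩ := di
    obtain ⟨hj1, hdj⟩ := dj
    set A : Fin n := ⟨i, by omega⟩ with hAdef
    set B : Fin n := ⟨i+1, hi1⟩ with hBdef
    set C : Fin n := ⟨j, by omega⟩ with hCdef
    set D : Fin n := ⟨j+1, hj1⟩ with hDdef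
    have hAB : A < B := by simp [hAdef, hBdef, Fin.lt_def]
    have hCD : C < D := by simp [hCdef, hDdef, Fin.lt_def]
    have hdi' : π B < π A := hdi
    have hdj' : π D < π C := hdj
    rcases eq_or_lt_of_le (by omega : i + 1 ≤ j) with heq | hBC'
    · -- B = C
      have hBC : B = C := Fin.ext heq
      have hBD : B < D := by simp [hBdef, hDdef, Fin.lt_def]; omega
      exact hA (occ321 π hAB hBD hdi' (by rw [hBC]; exact hdj'))
    · have hBC : B < C := by simp [hBdef, hCdef, Fin.lt_def]; omega
      have hAC : A < C := hAB.trans hBC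
      have neBC : B ≠ C := ne_of_lt hBC
      have neBD : B ≠ D := ne_of_lt (hBC.trans hCD)
      have neAC : A ≠ C := ne_of_lt hAC
      have neAD : A ≠ D := ne_of_lt (hAC.trans hCD)
      rcases lt_trichotomy (π C) (π B) with h1 | h1 | h1
      · exact hA (occ321 π hAB hBC hdi' h1)
      · exact absurd (π.injective h1.symm) neBC
      rcases lt_trichotomy (π D) (π B) with h2 | h2 | h2
      · exact hA (occ321 π hAB (hBC.trans hCD) hdi' h2)
      · exact absurd (π.injective h2.symm) neBD
      rcases lt_trichotomy (π C) (π A) with h3 | h3 | h3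
      · exact hA (occ321 π hAC hCD h3 hdj')
      · exact absurd (π.injective h3.symm) neAC
      rcases lt_trichotomy (π A) (π D) with h4 | h4 | h4
      · exact hB (occ2143 π hAB hBC hCD hdi' h4 hdj')
      · exact absurd (π.injective h4) neAD
      · exact hC (occ3142 π hAB hBC hCD h2 h4 h3)
end

section
/- Let π be a permutation of length n with exactly one descent and no adjacencies, and let λ be the unique permutation of length n−1 with exactly one descent, no adjacencies, and not related to π (i.e., exactly one of λ, π begins with the value 1). Then λ is obtained from π by deleting the letter 1, and λ occurs as a pattern in π. -/
open scoped Classical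

section AuxDeleteOne

def pv {n : ℕ} (π : Equiv.Perm (Fin n)) (i : ℕ) : ℕ :=
  if h : i < n then (π ⟨i, h⟩ : ℕ) else 0

lemma pv_eq {n : ℕ} (π : Equiv.Perm (Fin n)) {i : ℕ} (h : i < n) :
    pv π i = (π ⟨i, h⟩ : ℕ) := dif_pos h

lemma pv_lt {n : ℕ} (π : Equiv.Perm (Fin n)) {i : ℕ} (h : i < n) :
    pv π i < n := by rw [pv_eq π h]; exact (π ⟨i, h⟩).isLt

lemma pv_inj {n : ℕ} (π : Equiv.Perm (Fin n)) {i j : ℕ} (hi : i < n) (hj : j < n)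
    (h : pv π i = pv π j) : i = j := by
  rw [pv_eq π hi, pv_eq π hj] at h
  have h2 : π ⟨i, hi⟩ = π ⟨j, hj⟩ := Fin.ext h
  have := π.injective h2
  exact congrArg Fin.val this

lemma pv_surj {n : ℕ} (π : Equiv.Perm (Fin n)) {v : ℕ} (hv : v < n) :
    ∃ i, i < n ∧ pv π i = v := by
  refine ⟨(π.symm ⟨v, hv⟩ : ℕ), (π.symm ⟨v, hv⟩).isLt, ?_⟩
  rw [pv_eq π (π.symm ⟨v, hv⟩).isLt]
  have : (⟨(π.symm ⟨v, hv⟩ : ℕ), (π.symm ⟨v, hv⟩).isLt⟩ : Fin n) = π.symm ⟨v, hv⟩ := rfl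
  rw [this, Equiv.apply_symm_apply]

lemma classify {n : ℕ} (π : Equiv.Perm (Fin n)) (hdπ : descentCount π = 1)
    (haπ : adjCount π = 0) :
    ∃ c d : ℕ, c ≤ 1 ∧ d + 1 < n ∧ 2*d + c + 1 ≤ n ∧ n ≤ 2*d + c + 2 ∧
      (1 - c) < c + 2*d ∧
      ∀ i, i < n → (i ≤ d → pv π i = c + 2*i) ∧ (d < i → pv π i = 1 - c + 2*(i-d-1)) := by
  classical
  rw [descentCount, Finset.card_eq_one] at hdπ
  obtain ⟨d, hd⟩ := hdπ
  have hdes : descends π d := by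
    have : d ∈ (Finset.range n).filter fun i => descends π i := by
      rw [hd]; exact Finset.mem_singleton_self d
    exact (Finset.mem_filter.mp this).2
  obtain ⟨hd1, hdlt⟩ := hdes
  have huniq : ∀ i, descends π i → i = d := by
    intro i hi
    have : i ∈ (Finset.range n).filter fun j => descends π j :=
      Finset.mem_filter.mpr ⟨Finset.mem_range.mpr (by obtain ⟨h, _⟩ := hi; omega), hi⟩
    rw [hd] at this; exact Finset.mem_singleton.mp this
  have hadj : ∀ i, ¬ adjAt π i := by
    intro i hi
    rw [adjCount, Finset.card_eq_zero] at haπ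
    have : i ∈ (Finset.range n).filter fun j => adjAt π j :=
      Finset.mem_filter.mpr ⟨Finset.mem_range.mpr (by obtain ⟨h, _⟩ := hi; omega), hi⟩
    rw [haπ] at this; exact absurd this (Finset.notMem_empty i)
  have hdlt' : pv π (d+1) < pv π d := by
    rw [pv_eq π hd1, pv_eq π (Nat.lt_of_succ_lt hd1)]; exact hdlt
  have hasc : ∀ i, i + 1 < n → i ≠ d → pv π i + 2 ≤ pv π (i+1) := by
    intro i h1 hne
    have hnd : ¬ descends π i := fun h => hne (huniq i h)
    have hna : ¬ adjAt π i := hadj i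
    rw [descends] at hnd; push_neg at hnd
    rw [adjAt] at hna; push_neg at hna
    have e1 := hnd h1
    have e2 := hna h1
    have e3 : pv π i ≠ pv π (i+1) := fun h => by
      have := pv_inj π (Nat.lt_of_succ_lt h1) h1 h; omega
    rw [pv_eq π h1, pv_eq π (Nat.lt_of_succ_lt h1)] at e3 ⊢
    have e1' : (π ⟨i, Nat.lt_of_succ_lt h1⟩ : ℕ) ≤ (π ⟨i+1, h1⟩ : ℕ) := Fin.le_def.mp e1
    omega
  -- gap lemmas
  have gapA0 : ∀ k i, i + k ≤ d → pv π i + 2*k ≤ pv π (i+k) := by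
    intro k
    induction k with
    | zero => intro i _; simp
    | succ k ih =>
      intro i h
      have h1 := ih i (by omega)
      have h2 := hasc (i+k) (by omega) (by omega)
      have h3 : pv π (i+(k+1)) = pv π (i+k+1) := rfl
      omega
  have gapA : ∀ i j, i ≤ j → j ≤ d → pv π i + 2*(j-i) ≤ pv π j := by
    intro i j hij hjd
    have := gapA0 (j-i) i (by omega)
    rwa [show i + (j-i) = j from by omega] at this
  have gapB0 : ∀ k i, d < i → i + k < n → pv π i + 2*k ≤ pv π (i+k) := by
    intro k
    induction k with
    | zero => intro i _ _; simp
    | succ k ih =>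
      intro i hdi h
      have h1 := ih i hdi (by omega)
      have h2 := hasc (i+k) (by omega) (by omega)
      have h3 : pv π (i+(k+1)) = pv π (i+k+1) := rfl
      omega
  have gapB : ∀ i j, d < i → i ≤ j → j < n → pv π i + 2*(j-i) ≤ pv π j := by
    intro i j hdi hij hjn
    have := gapB0 (j-i) i hdi (by omega)
    rwa [show i + (j-i) = j from by omega] at this
  have consec : ∀ v a b, v + 1 < n → a < n → b < n → pv π a = v → pv π b = v + 1 →
      ((a ≤ d ∧ d < b) ∨ (b ≤ d ∧ d < a)) := by
    intro v a b hv ha hb hpa hpb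
    by_cases haA : a ≤ d <;> by_cases hbA : b ≤ d
    · exfalso
      rcases lt_trichotomy a b with h | h | h
      · have := gapA a b h.le hbA; omega
      · subst h; omega
      · have := gapA b a h.le haA; omega
    · exact Or.inl ⟨haA, by omega⟩
    · exact Or.inr ⟨hbA, by omega⟩
    · exfalso
      rcases lt_trichotomy a b with h | h | h
      · have := gapB a b (by omega) h.le hb; omega
      · subst h; omega
      · have := gapB b a (by omega) h.le ha; omega
  have key01 : ∀ v a, v ≤ 1 → a < n → pv π a = v → a = 0 ∨ a = d + 1 := by
    intro v a hv ha hpa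
    by_cases hA : a ≤ d
    · left; by_contra h0
      have := gapA 0 a (by omega) hA; omega
    · right; by_contra h0
      have := gapB (d+1) a (by omega) (by omega) ha; omega
  obtain ⟨a0, ha0n, hpa0⟩ := pv_surj π (show 0 < n by omega)
  obtain ⟨a1, ha1n, hpa1⟩ := pv_surj π (show 1 < n by omega)
  have h0 := key01 0 a0 (by omega) ha0n hpa0
  have h1 := key01 1 a1 (by omega) ha1n hpa1
  have hne01 : a0 ≠ a1 := fun h => by rw [h, hpa1] at hpa0; omega
  have hc : (pv π 0 = 0 ∧ pv π (d+1) = 1) ∨ (pv π 0 = 1 ∧ pv π (d+1) = 0) := by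
    rcases h0 with h0 | h0 <;> rcases h1 with h1 | h1 <;> subst h0 <;> subst h1
    · omega
    · left; exact ⟨hpa0, hpa1⟩
    · right; exact ⟨hpa1, hpa0⟩
    · omega
  have valueA : ∀ i, i ≤ d → pv π i = pv π 0 + 2*i := by
    intro i
    induction i with
    | zero => intro _; omega
    | succ i ih =>
      intro h
      have hv := ih (by omega)
      have hlow := hasc i (by omega) (by omega)
      by_contra hne
      have hup : pv π i + 3 ≤ pv π (i+1) := by omega
      have hvlt : pv π i + 2 < n := by have := pv_lt π (show i+1 < n by omega); omega
      obtain ⟨a, han, hpa⟩ := pv_surj π (show pv π i + 1 < n by omega)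
      obtain ⟨b, hbn, hpb⟩ := pv_surj π (show pv π i + 2 < n by omega)
      have hda : d < a := by
        by_contra hA; push_neg at hA
        rcases lt_trichotomy a i with h' | h' | h'
        · have := gapA a i h'.le (by omega); omega
        · subst h'; omega
        · rcases eq_or_lt_of_le (show i + 1 ≤ a from h') with h'' | h''
          · rw [← h''] at hpa; omega
          · have := gapA (i+1) a h''.le hA; omega
      have hdb : d < b := by
        by_contra hA; push_neg at hA
        rcases lt_trichotomy b i with h' | h' | h'
        · have := gapA b i h'.le (by omega); omega
        · subst h'; omega
        · rcases eq_or_lt_of_le (show i + 1 ≤ b from h') with h'' | h''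
          · rw [← h''] at hpb; omega
          · have := gapA (i+1) b h''.le hA; omega
      have := consec (pv π i + 1) a b (by omega) han hbn hpa (by omega)
      omega
  have valueB : ∀ j, d+1+j < n → pv π (d+1+j) = pv π (d+1) + 2*j := by
    intro j
    induction j with
    | zero => intro _; simp
    | succ j ih =>
      intro h
      have e1 : d + 1 + (j+1) = (d+1+j)+1 := by omega
      rw [e1] at h ⊢
      have hv := ih (by omega)
      have hlow := hasc (d+1+j) (by omega) (by omega)
      by_contra hne
      have hup : pv π (d+1+j) + 3 ≤ pv π (d+1+j+1) := by omega
      have hvlt : pv π (d+1+j) + 2 < n := by have := pv_lt π (show d+1+j+1 < n by omega); omega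
      obtain ⟨a, han, hpa⟩ := pv_surj π (show pv π (d+1+j) + 1 < n by omega)
      obtain ⟨b, hbn, hpb⟩ := pv_surj π (show pv π (d+1+j) + 2 < n by omega)
      have hda : a ≤ d := by
        by_contra hA; push_neg at hA
        rcases lt_trichotomy a (d+1+j) with h' | h' | h'
        · have := gapB a (d+1+j) hA h'.le (by omega); omega
        · subst h'; omega
        · rcases eq_or_lt_of_le (show d+1+j+1 ≤ a from h') with h'' | h''
          · rw [← h''] at hpa; omega
          · have := gapB (d+1+j+1) a (by omega) h''.le han; omega
      have hdb : b ≤ d := by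
        by_contra hA; push_neg at hA
        rcases lt_trichotomy b (d+1+j) with h' | h' | h'
        · have := gapB b (d+1+j) hA h'.le (by omega); omega
        · subst h'; omega
        · rcases eq_or_lt_of_le (show d+1+j+1 ≤ b from h') with h'' | h''
          · rw [← h''] at hpb; omega
          · have := gapB (d+1+j+1) b (by omega) h''.le hbn; omega
      have := consec (pv π (d+1+j) + 1) a b (by omega) han hbn hpa (by omega)
      omega
  refine ⟨pv π 0, d, by omega, hd1, ?_, ?_, ?_, ?_⟩
  · have := valueA d (le_refl d)
    have := pv_lt π (show d < n by omega)
    omega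
  · have h9 : d < n - 1 := by omega
    have := valueB (n-1-d-1) (by omega)
    rw [show d+1+(n-1-d-1) = n-1 from by omega] at this
    have := pv_lt π (show n-1 < n by omega)
    omega
  · have hA := valueA d (le_refl d)
    omega
  · intro i hi
    constructor
    · intro hid
      exact valueA i hid
    · intro hdi
      have := valueB (i-d-1) (by omega)
      rw [show d+1+(i-d-1) = i from by omega] at this
      omega

end AuxDeleteOne

/-- If `π` has one descent and no adjacencies, and `λ` is a permutation of length `n-1`
with one descent, no adjacencies, not related to `π`, then `λ` is obtained from `π` by
deleting the letter 1, and `λ` occurs in `π`. -/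
theorem delete_one_of_no_adjacencies {n : ℕ} (π : Equiv.Perm (Fin n))
    (hdπ : descentCount π = 1) (haπ : adjCount π = 0)
    (lam : Equiv.Perm (Fin (n - 1)))
    (hdl : descentCount lam = 1) (hal : adjCount lam = 0)
    (hrel : ¬ (beginsWithOne lam ↔ beginsWithOne π)) :
    (∃ hn : 0 < n, ∀ i : Fin (n - 1),
      if (i : ℕ) < ((π.symm ⟨0, hn⟩ : Fin n) : ℕ) then
        (lam i : ℕ) + 1 = (π ⟨i, lt_of_lt_of_le i.isLt (Nat.sub_le n 1)⟩ : ℕ)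
      else
        (lam i : ℕ) + 1 = (π ⟨(i : ℕ) + 1, by have := i.isLt; omega⟩ : ℕ)) ∧
    Occurs lam π := by
  obtain ⟨c, d, hc1, hd1, hb1, hb2, hds, hval⟩ := classify π hdπ haπ
  obtain ⟨e, m, he1, hm1, hbl1, hbl2, hdsl, hvall⟩ := classify lam hdl hal
  have hn : 0 < n := by omega
  have hn1 : 0 < n - 1 := by omega
  have hbwπ : beginsWithOne π ↔ c = 0 := by
    constructor
    · rintro ⟨h, h0⟩
      have h2 := (hval 0 hn).1 (Nat.zero_le d)
      rw [pv_eq π h] at h2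
      omega
    · intro h
      refine ⟨hn, ?_⟩
      have h2 := (hval 0 hn).1 (Nat.zero_le d)
      rw [pv_eq π hn] at h2
      omega
  have hbwl : beginsWithOne lam ↔ e = 0 := by
    constructor
    · rintro ⟨h, h0⟩
      have h2 := (hvall 0 hn1).1 (Nat.zero_le m)
      rw [pv_eq lam h] at h2
      omega
    · intro h
      refine ⟨hn1, ?_⟩
      have h2 := (hvall 0 hn1).1 (Nat.zero_le m)
      rw [pv_eq lam hn1] at h2
      omega
  rw [hbwl, hbwπ] at hrel
  have he : e = 1 - c := by omega
  have hdel : ∀ i : Fin (n - 1),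
      if (i : ℕ) < ((π.symm ⟨0, hn⟩ : Fin n) : ℕ) then
        (lam i : ℕ) + 1 = (π ⟨i, lt_of_lt_of_le i.isLt (Nat.sub_le n 1)⟩ : ℕ)
      else
        (lam i : ℕ) + 1 = (π ⟨(i : ℕ) + 1, by have := i.isLt; omega⟩ : ℕ) := by
    intro i
    have hi : (i : ℕ) < n - 1 := i.isLt
    have hlam : (lam i : ℕ) = pv lam (i : ℕ) := (pv_eq lam hi).symm
    by_cases hc0 : c = 0
    · -- value 0 is at position 0
      have he' : e = 1 := by omega
      have ht : ((π.symm ⟨0, hn⟩ : Fin n) : ℕ) = 0 := by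
        have h2 := (hval 0 hn).1 (Nat.zero_le d)
        rw [pv_eq π hn] at h2
        have h3 : π ⟨0, hn⟩ = ⟨0, hn⟩ := Fin.ext (show (π ⟨0, hn⟩ : ℕ) = 0 by omega)
        have h4 : π.symm ⟨0, hn⟩ = ⟨0, hn⟩ := by rw [Equiv.symm_apply_eq, h3]
        rw [h4]
      rw [ht, if_neg (by omega)]
      suffices h : pv lam (i : ℕ) + 1 = pv π ((i : ℕ) + 1) by
        rw [pv_eq lam hi, pv_eq π (show (i:ℕ)+1 < n by omega)] at h
        exact h
      rcases le_or_gt (i : ℕ) m with him | him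
      · have h1 := (hvall (i : ℕ) hi).1 him
        have h2 := (hval ((i : ℕ) + 1) (by omega)).1 (by omega)
        omega
      · have h1 := (hvall (i : ℕ) hi).2 him
        have h2 := (hval ((i : ℕ) + 1) (by omega)).2 (by omega)
        omega
    · -- c = 1 : value 0 is at position d+1
      have hcc : c = 1 := by omega
      have he' : e = 0 := by omega
      have ht : ((π.symm ⟨0, hn⟩ : Fin n) : ℕ) = d + 1 := by
        have h2 := (hval (d+1) hd1).2 (by omega)
        rw [pv_eq π hd1] at h2
        have h3 : π ⟨d+1, hd1⟩ = ⟨0, hn⟩ := Fin.ext (show (π ⟨d+1, hd1⟩ : ℕ) = 0 by omega)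
        have h4 : π.symm ⟨0, hn⟩ = ⟨d+1, hd1⟩ := by rw [Equiv.symm_apply_eq, h3]
        rw [h4]
      rw [ht]
      by_cases hit : (i : ℕ) < d + 1
      · rw [if_pos hit]
        suffices h : pv lam (i : ℕ) + 1 = pv π (i : ℕ) by
          rw [pv_eq lam hi, pv_eq π (show (i:ℕ) < n by omega)] at h
          exact h
        have h1 := (hvall (i : ℕ) hi).1 (by omega)
        have h2 := (hval (i : ℕ) (by omega)).1 (by omega)
        omega
      · rw [if_neg hit]
        suffices h : pv lam (i : ℕ) + 1 = pv π ((i : ℕ) + 1) by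
          rw [pv_eq lam hi, pv_eq π (show (i:ℕ)+1 < n by omega)] at h
          exact h
        have h1 := (hvall (i : ℕ) hi).2 (by omega)
        have h2 := (hval ((i : ℕ) + 1) (by omega)).2 (by omega)
        omega
  refine ⟨⟨hn, hdel⟩, ?_⟩
  refine ⟨fun i => if (i : ℕ) < ((π.symm ⟨0, hn⟩ : Fin n) : ℕ) then
      ⟨(i : ℕ), by have := i.isLt; omega⟩ else ⟨(i : ℕ) + 1, by have := i.isLt; omega⟩, ?_, ?_⟩
  · intro a b hab
    have ha := a.isLt
    have hb := b.isLt
    have hab' : (a : ℕ) < (b : ℕ) := hab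
    dsimp only
    split_ifs with h1 h2 h2 <;> exact Fin.mk_lt_mk.mpr (by omega)
  · have key : ∀ x : Fin (n - 1),
        (π (if (x : ℕ) < ((π.symm ⟨0, hn⟩ : Fin n) : ℕ) then
          (⟨(x : ℕ), by have := x.isLt; omega⟩ : Fin n) else
          ⟨(x : ℕ) + 1, by have := x.isLt; omega⟩) : ℕ) = (lam x : ℕ) + 1 := by
      intro x
      have h := hdel x
      by_cases hx : (x : ℕ) < ((π.symm ⟨0, hn⟩ : Fin n) : ℕ)
      · rw [if_pos hx] at h ⊢; exact h.symm
      · rw [if_neg hx] at h ⊢; exact h.symm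
    intro a b
    simp only [Fin.lt_def]
    rw [key a, key b]
    omega
end

section
/- Let π be a permutation of length n with exactly one descent and no adjacencies. Then every permutation with exactly one descent, at most two adjacencies, and length at most n−3 occurs as a pattern in π. -/
open scoped Classical

section Aux
variable {N : ℕ} (ρ : Equiv.Perm (Fin N)) (d : ℕ)

lemma step_lt (Hd : ∀ i, descends ρ i ↔ i = d) {i : ℕ} (h : i + 1 < N) (hne : i ≠ d) :
    ρ ⟨i, Nat.lt_of_succ_lt h⟩ < ρ ⟨i + 1, h⟩ := by
  have hnd : ¬ descends ρ i := fun hdes => hne ((Hd i).mp hdes)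
  have hle : ρ ⟨i, Nat.lt_of_succ_lt h⟩ ≤ ρ ⟨i + 1, h⟩ :=
    not_lt.mp fun hlt => hnd ⟨h, hlt⟩
  rcases lt_or_eq_of_le hle with h' | h'
  · exact h'
  · exfalso
    have := ρ.injective h'
    simp [Fin.ext_iff] at this

lemma run_lt (Hd : ∀ i, descends ρ i ↔ i = d) {i j : ℕ} (hij : i < j) (hj : j < N)
    (hrun : j ≤ d ∨ d < i) :
    ρ ⟨i, lt_trans hij hj⟩ < ρ ⟨j, hj⟩ := by
  induction j with
  | zero => omega
  | succ j ih =>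
    have hjd : j ≠ d := by rcases hrun with h | h <;> omega
    have hstep := step_lt ρ d Hd hj hjd
    rcases Nat.lt_or_ge i j with h' | h'
    · have hjN : j < N := Nat.lt_of_succ_lt hj
      have hrun' : j ≤ d ∨ d < i := by rcases hrun with h | h <;> omega
      exact lt_trans (ih h' hjN hrun') hstep
    · have : i = j := by omega
      subst this
      exact hstep

lemma pos_lt (Hd : ∀ i, descends ρ i ↔ i = d) {x y : ℕ} (hx : x < N) (hy : y < N)
    (hxy : x < y)
    (hrun : ((ρ.symm ⟨x, hx⟩ : ℕ) ≤ d ↔ (ρ.symm ⟨y, hy⟩ : ℕ) ≤ d)) :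
    (ρ.symm ⟨x, hx⟩ : ℕ) < (ρ.symm ⟨y, hy⟩ : ℕ) := by
  set u := ρ.symm ⟨x, hx⟩ with hu
  set v := ρ.symm ⟨y, hy⟩ with hv
  rcases lt_trichotomy (v : ℕ) (u : ℕ) with h | h | h
  · exfalso
    have hrun' : (u : ℕ) ≤ d ∨ d < (v : ℕ) := by omega
    have hlt := run_lt ρ d Hd h u.isLt hrun'
    have e1 : ρ ⟨(v : ℕ), lt_trans h u.isLt⟩ = ⟨y, hy⟩ := by
      have : (⟨(v : ℕ), lt_trans h u.isLt⟩ : Fin N) = v := rfl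
      rw [this, hv, Equiv.apply_symm_apply]
    have e2 : ρ ⟨(u : ℕ), u.isLt⟩ = ⟨x, hx⟩ := by
      have : (⟨(u : ℕ), u.isLt⟩ : Fin N) = u := rfl
      rw [this, hu, Equiv.apply_symm_apply]
    rw [e1, e2] at hlt
    exact absurd hxy (by simpa [Fin.lt_def] using not_lt.mpr (le_of_lt hlt))
  · exfalso
    have : u = v := Fin.ext h.symm
    have : (⟨x, hx⟩ : Fin N) = ⟨y, hy⟩ := by
      rw [hu, hv] at this
      exact ρ.symm.injective this
    simp [Fin.ext_iff] at this
    omega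
  · exact h

lemma adj_of_same_run (Hd : ∀ i, descends ρ i ↔ i = d) {v : ℕ} (h : v + 1 < N)
    (hsame : ((ρ.symm ⟨v, Nat.lt_of_succ_lt h⟩ : ℕ) ≤ d ↔ (ρ.symm ⟨v + 1, h⟩ : ℕ) ≤ d)) :
    adjAt ρ ((ρ.symm ⟨v, Nat.lt_of_succ_lt h⟩ : ℕ)) := by
  set u := ρ.symm ⟨v, Nat.lt_of_succ_lt h⟩ with hu
  set w := ρ.symm ⟨v + 1, h⟩ with hw
  have huw : (u : ℕ) < (w : ℕ) := pos_lt ρ d Hd _ _ (by omega) hsame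
  have eu : ρ ⟨(u : ℕ), u.isLt⟩ = ⟨v, Nat.lt_of_succ_lt h⟩ := by
    have : (⟨(u : ℕ), u.isLt⟩ : Fin N) = u := rfl
    rw [this, hu, Equiv.apply_symm_apply]
  have ew : ρ ⟨(w : ℕ), w.isLt⟩ = ⟨v + 1, h⟩ := by
    have : (⟨(w : ℕ), w.isLt⟩ : Fin N) = w := rfl
    rw [this, hw, Equiv.apply_symm_apply]
  by_cases hcons : (u : ℕ) + 1 = (w : ℕ)
  · refine ⟨by omega, ?_⟩
    have : (⟨(u : ℕ) + 1, by omega⟩ : Fin N) = ⟨(w : ℕ), w.isLt⟩ := Fin.ext hcons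
    rw [this, ew]
    simp only [eu]
  · exfalso
    have h1 : (u : ℕ) + 1 < (w : ℕ) := by omega
    have hrun1 : (u : ℕ) + 1 ≤ d ∨ d < (u : ℕ) := by
      by_cases hc : (u : ℕ) ≤ d
      · left; have := hsame.mp hc; omega
      · right; omega
    have hrun2 : (w : ℕ) ≤ d ∨ d < (u : ℕ) + 1 := by
      by_cases hc : (u : ℕ) ≤ d
      · left; exact hsame.mp hc
      · right; omega
    have hlt1 := run_lt ρ d Hd (Nat.lt_succ_self (u : ℕ)) (lt_trans h1 w.isLt) hrun1
    have hlt2 := run_lt ρ d Hd h1 w.isLt hrun2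
    rw [eu] at hlt1
    rw [ew] at hlt2
    have b1 : v < (ρ ⟨(u : ℕ) + 1, lt_trans h1 w.isLt⟩ : ℕ) := hlt1
    have b2 : (ρ ⟨(u : ℕ) + 1, lt_trans h1 w.isLt⟩ : ℕ) < v + 1 := hlt2
    omega

lemma parity_char (Hd : ∀ i, descends ρ i ↔ i = d) (Hadj : ∀ i, ¬ adjAt ρ i)
    (h0 : 0 < N) :
    ∀ v (hv : v < N),
      ((ρ.symm ⟨v, hv⟩ : ℕ) ≤ d ↔ (Even v ↔ (ρ.symm ⟨0, h0⟩ : ℕ) ≤ d)) := by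
  intro v
  induction v with
  | zero => intro hv; simp
  | succ v ih =>
    intro hv
    have hv' : v < N := Nat.lt_of_succ_lt hv
    have hne : ¬ (((ρ.symm ⟨v, hv'⟩ : ℕ) ≤ d) ↔ ((ρ.symm ⟨v + 1, hv⟩ : ℕ) ≤ d)) :=
      fun hsame => Hadj _ (adj_of_same_run ρ d Hd hv hsame)
    have hih := ih hv'
    rw [Nat.even_add_one]
    tauto

end Aux

lemma exists_descent_s7 {N : ℕ} (ρ : Equiv.Perm (Fin N)) (h : descentCount ρ = 1) :
    ∃ d, ∀ i, descends ρ i ↔ i = d := by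
  unfold descentCount at h
  obtain ⟨d, hd⟩ := Finset.card_eq_one.mp h
  refine ⟨d, fun i => ?_⟩
  have hmem := fun j => Finset.ext_iff.mp hd j
  simp only [Finset.mem_filter, Finset.mem_range, Finset.mem_singleton] at hmem
  constructor
  · intro hi
    exact (hmem i).mp ⟨Nat.lt_of_succ_lt hi.1, hi⟩
  · intro hi
    have := ((hmem d).mpr rfl).2
    rwa [hi]

lemma no_adj {N : ℕ} (ρ : Equiv.Perm (Fin N)) (h : adjCount ρ = 0) :
    ∀ i, ¬ adjAt ρ i := by
  unfold adjCount at h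
  rw [Finset.card_eq_zero] at h
  intro i hi
  have hmem := Finset.ext_iff.mp h i
  simp only [Finset.mem_filter, Finset.mem_range, Finset.notMem_empty, iff_false,
    not_and] at hmem
  exact hmem (Nat.lt_of_succ_lt hi.1) hi


section Emb
variable {M : ℕ} (τ : Equiv.Perm (Fin M)) (e : ℕ) (b : Prop)

/-- value `v` of `τ` lies in the first run. -/
def cval (v : ℕ) : Prop := ∃ hv : v < M, (τ.symm ⟨v, hv⟩ : ℕ) ≤ e

/-- values `j` and `j+1` lie in the same run of `τ`. -/
def sameAt (j : ℕ) : Prop := j + 1 < M ∧ (cval τ e j ↔ cval τ e (j + 1))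

noncomputable def cnt (v : ℕ) : ℕ := ((Finset.range v).filter (sameAt τ e)).card

noncomputable def emb (v : ℕ) : ℕ :=
  v + (if cval τ e 0 ↔ b then 0 else 1) + cnt τ e v

lemma cval_spec (v : ℕ) (hv : v < M) : cval τ e v ↔ (τ.symm ⟨v, hv⟩ : ℕ) ≤ e := by
  constructor
  · rintro ⟨h1, h2⟩; exact h2
  · intro h; exact ⟨hv, h⟩

lemma cnt_succ (v : ℕ) :
    cnt τ e (v + 1) = if sameAt τ e v then cnt τ e v + 1 else cnt τ e v := by
  simp only [cnt, Finset.range_add_one, Finset.filter_insert]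
  split
  · rw [Finset.card_insert_of_notMem (fun hmem => by simp at hmem)]
  · rfl

lemma emb_mono : StrictMono (emb τ e b) := by
  apply strictMono_nat_of_lt_succ
  intro v
  have h := cnt_succ τ e v
  simp only [emb]
  split at h <;> omega

lemma emb_le (v : ℕ) : emb τ e b v ≤ v + 1 + cnt τ e v := by
  simp only [emb]; split <;> omega

lemma emb_parity : ∀ v, v < M → ((Even (emb τ e b v) ↔ b) ↔ cval τ e v) := by
  intro v
  induction v with
  | zero =>
    intro _
    have h0 : emb τ e b 0 = if cval τ e 0 ↔ b then 0 else 1 := by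
      simp [emb, cnt]
    rw [h0]
    by_cases hc : cval τ e 0 ↔ b
    · rw [if_pos hc]
      have h1 : Even 0 := Even.zero
      tauto
    · rw [if_neg hc]
      have h1 : ¬ Even 1 := by decide
      tauto
  | succ v ih =>
    intro hv
    have hv' : v < M := Nat.lt_of_succ_lt hv
    have ihh := ih hv'
    by_cases hs : cval τ e v ↔ cval τ e (v + 1)
    · have h2 : cnt τ e (v + 1) = cnt τ e v + 1 := by
        rw [cnt_succ, if_pos ⟨hv, hs⟩]
      have h3 : emb τ e b (v + 1) = emb τ e b v + 2 := by
        simp only [emb, h2]; omega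
      rw [h3]
      have h4 : Even (emb τ e b v + 2) ↔ Even (emb τ e b v) := by
        simp [Nat.even_add]
      rw [h4, ihh]
      exact hs
    · have hnot : ¬ sameAt τ e v := fun hh => hs hh.2
      have h2 : cnt τ e (v + 1) = cnt τ e v := by rw [cnt_succ, if_neg hnot]
      have h3 : emb τ e b (v + 1) = emb τ e b v + 1 := by
        simp only [emb, h2]; omega
      rw [h3, Nat.even_add_one]
      tauto

lemma cnt_le (Hd : ∀ i, descends τ i ↔ i = e) {v : ℕ} (hv : v ≤ M) :
    cnt τ e v ≤ adjCount τ := by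
  unfold adjCount cnt
  apply Finset.card_le_card_of_injOn
    (fun j => if h : j < M then (τ.symm ⟨j, h⟩ : ℕ) else 0)
  · intro j hj
    simp only [Finset.mem_coe, Finset.mem_filter, Finset.mem_range] at hj
    obtain ⟨hjv, hj1, hsame⟩ := hj
    have hjm : j < M := Nat.lt_of_succ_lt hj1
    simp only [dif_pos hjm]
    have hsame' : ((τ.symm ⟨j, Nat.lt_of_succ_lt hj1⟩ : ℕ) ≤ e ↔
        (τ.symm ⟨j + 1, hj1⟩ : ℕ) ≤ e) := by
      rw [← cval_spec τ e j (Nat.lt_of_succ_lt hj1), ← cval_spec τ e (j + 1) hj1]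
      exact hsame
    have hadj := adj_of_same_run τ e Hd hj1 hsame'
    simp only [Finset.mem_coe, Finset.mem_filter, Finset.mem_range]
    exact ⟨Fin.isLt _, hadj⟩
  · intro j1 hj1 j2 hj2 hEq
    simp only [Finset.coe_filter, Finset.mem_range, Set.mem_setOf_eq] at hj1 hj2
    have hm1 : j1 < M := Nat.lt_of_succ_lt hj1.2.1
    have hm2 : j2 < M := Nat.lt_of_succ_lt hj2.2.1
    simp only [dif_pos hm1, dif_pos hm2] at hEq
    have h1 : (τ.symm ⟨j1, hm1⟩ : Fin M) = τ.symm ⟨j2, hm2⟩ := Fin.ext hEq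
    have h2 := τ.symm.injective h1
    simpa [Fin.ext_iff] using h2

end Emb


/-- A permutation with one descent and no adjacencies contains every permutation with one
descent, at most two adjacencies, and length at most `n - 3`. -/
theorem occurs_of_short_few_adjacencies {n : ℕ} (π : Equiv.Perm (Fin n))
    (hdπ : descentCount π = 1) (haπ : adjCount π = 0)
    {m : ℕ} (σ : Equiv.Perm (Fin m))
    (hdσ : descentCount σ = 1) (haσ : adjCount σ ≤ 2) (hm : m + 3 ≤ n) :
    Occurs σ π := by
  obtain ⟨d, Hdπ⟩ := exists_descent_s7 π hdπ
  obtain ⟨e, Hdσ⟩ := exists_descent_s7 σ hdσ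
  have Hadjπ := no_adj π haπ
  have hdn : d + 1 < n := ((Hdπ d).mpr rfl).1
  have hem : e + 1 < m := ((Hdσ e).mpr rfl).1
  have h0n : 0 < n := by omega
  set b : Prop := ((π.symm ⟨0, h0n⟩ : ℕ) ≤ d) with hb
  set g : ℕ → ℕ := emb σ e b with hgdef
  have gmono : StrictMono g := emb_mono σ e b
  have gbound : ∀ v, v < m → g v < n := by
    intro v hv
    have h1 : cnt σ e v ≤ 2 := le_trans (cnt_le σ e Hdσ (le_of_lt hv)) haσ
    have h2 : g v ≤ v + 1 + cnt σ e v := emb_le σ e b v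
    omega
  have key : ∀ v (hv : v < m),
      ((π.symm ⟨g v, gbound v hv⟩ : ℕ) ≤ d ↔ (σ.symm ⟨v, hv⟩ : ℕ) ≤ e) := by
    intro v hv
    have h1 := parity_char π d Hdπ Hadjπ h0n (g v) (gbound v hv)
    have h2 := emb_parity σ e b v hv
    have h3 := cval_spec σ e v hv
    rw [← hb] at h1
    exact h1.trans (h2.trans h3)
  set f : Fin m → Fin n := fun i => π.symm ⟨g (σ i : ℕ), gbound _ (σ i).isLt⟩ with hf
  have fval : ∀ i : Fin m, ((f i : ℕ) ≤ d ↔ (i : ℕ) ≤ e) := by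
    intro i
    have h1 := key (σ i : ℕ) (σ i).isLt
    have h2 : (σ.symm ⟨(σ i : ℕ), (σ i).isLt⟩ : Fin m) = i := by
      have h3 : (⟨(σ i : ℕ), (σ i).isLt⟩ : Fin m) = σ i := rfl
      rw [h3, Equiv.symm_apply_apply]
    rw [h2] at h1
    exact h1
  have hσlt : ∀ i j : Fin m, (i : ℕ) < (j : ℕ) → ((j : ℕ) ≤ e ∨ e < (i : ℕ)) →
      (σ i : ℕ) < (σ j : ℕ) := by
    intro i j hij hrun
    have h4 := run_lt σ e Hdσ hij j.isLt hrun
    have e1 : (⟨(i : ℕ), lt_trans hij j.isLt⟩ : Fin m) = i := rfl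
    have e2 : (⟨(j : ℕ), j.isLt⟩ : Fin m) = j := rfl
    rw [e1, e2] at h4
    exact Fin.lt_def.mp h4
  have fmono : StrictMono f := by
    intro i j hij
    have hij' : (i : ℕ) < (j : ℕ) := hij
    rw [Fin.lt_def]
    by_cases hie : (i : ℕ) ≤ e <;> by_cases hje : (j : ℕ) ≤ e
    · have hσ : (σ i : ℕ) < (σ j : ℕ) := hσlt i j hij' (Or.inl hje)
      have hg : g (σ i : ℕ) < g (σ j : ℕ) := gmono hσ
      exact pos_lt π d Hdπ (gbound _ (σ i).isLt) (gbound _ (σ j).isLt) hg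
        (iff_of_true ((fval i).mpr hie) ((fval j).mpr hje))
    · have h1 : (f i : ℕ) ≤ d := (fval i).mpr hie
      have h2 : ¬ (f j : ℕ) ≤ d := fun hh => hje ((fval j).mp hh)
      omega
    · omega
    · have hσ : (σ i : ℕ) < (σ j : ℕ) := hσlt i j hij' (Or.inr (by omega))
      have hg : g (σ i : ℕ) < g (σ j : ℕ) := gmono hσ
      exact pos_lt π d Hdπ (gbound _ (σ i).isLt) (gbound _ (σ j).isLt) hg
        (iff_of_false (fun hh => hie ((fval i).mp hh)) (fun hh => hje ((fval j).mp hh)))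
  refine ⟨f, fmono, fun a b' => ?_⟩
  have ea : π (f a) = ⟨g (σ a : ℕ), gbound _ (σ a).isLt⟩ := by
    rw [hf]; exact π.apply_symm_apply _
  have eb : π (f b') = ⟨g (σ b' : ℕ), gbound _ (σ b').isLt⟩ := by
    rw [hf]; exact π.apply_symm_apply _
  rw [ea, eb, Fin.lt_def, Fin.lt_def]
  exact (gmono.lt_iff_lt).symm
end

section
/- Let π be a permutation of length n with exactly one descent and no adjacencies. Then no permutation of length n−1 with exactly one descent and exactly two adjacencies occurs as a pattern in π. -/
open scoped Classical

/-- A permutation with one descent and no adjacencies contains no permutation of length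
`n - 1` with one descent and exactly two adjacencies. -/
theorem not_occurs_two_adjacencies {n : ℕ} (π : Equiv.Perm (Fin n))
    (hdπ : descentCount π = 1) (haπ : adjCount π = 0)
    (σ : Equiv.Perm (Fin (n - 1)))
    (hdσ : descentCount σ = 1) (haσ : adjCount σ = 2) :
    ¬ Occurs σ π := by
  rintro ⟨f, hf, hiso⟩
  -- the unique descent of π
  obtain ⟨d, hdset⟩ := Finset.card_eq_one.mp hdπ
  have hd : descends π d := by
    have : d ∈ (Finset.range n).filter fun i => descends π i :=
      hdset ▸ Finset.mem_singleton_self d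
    exact (Finset.mem_filter.mp this).2
  have hdu : ∀ e, descends π e → e = d := by
    intro e he
    have hen : e ∈ Finset.range n := Finset.mem_range.mpr (by obtain ⟨h, _⟩ := he; omega)
    have : e ∈ (Finset.range n).filter fun i => descends π i :=
      Finset.mem_filter.mpr ⟨hen, he⟩
    rw [hdset] at this
    exact Finset.mem_singleton.mp this
  have hn : 2 ≤ n := by obtain ⟨h, _⟩ := hd; omega
  -- π has no adjacencies
  have hnoadj : ∀ i, ¬ adjAt π i := by
    intro i hi
    have hin : i ∈ Finset.range n := Finset.mem_range.mpr (by obtain ⟨h, _⟩ := hi; omega)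
    have : i ∈ (Finset.range n).filter fun i => adjAt π i := Finset.mem_filter.mpr ⟨hin, hi⟩
    rw [Finset.card_eq_zero.mp haπ] at this
    exact absurd this (Finset.notMem_empty i)
  -- the unique missing position m
  have hcard : (Finset.univ.image f).card = n - 1 := by
    rw [Finset.card_image_of_injective _ hf.injective, Finset.card_univ, Fintype.card_fin]
  have hcc : (Finset.univ.image f)ᶜ.card = 1 := by
    rw [Finset.card_compl, hcard, Fintype.card_fin]; omega
  obtain ⟨m, hmset⟩ := Finset.card_eq_one.mp hcc
  have hm : ∀ c, f c ≠ m := by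
    intro c hc
    have : m ∈ (Finset.univ.image f)ᶜ := hmset ▸ Finset.mem_singleton_self m
    rw [Finset.mem_compl] at this
    exact this (Finset.mem_image.mpr ⟨c, Finset.mem_univ c, hc⟩)
  have hrange : ∀ p : Fin n, (∀ c, f c ≠ p) → p = m := by
    intro p hp
    have : p ∈ (Finset.univ.image f)ᶜ := by
      rw [Finset.mem_compl]
      intro hmem
      obtain ⟨c, _, hc⟩ := Finset.mem_image.mp hmem
      exact hp c hc
    rw [hmset] at this
    exact Finset.mem_singleton.mp this
  -- gap dichotomy for consecutive positions in the pattern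
  have gapd : ∀ (j : ℕ) (h : j + 1 < n - 1),
      (f ⟨j + 1, h⟩ : ℕ) = (f ⟨j, Nat.lt_of_succ_lt h⟩ : ℕ) + 1 ∨
      ((f ⟨j, Nat.lt_of_succ_lt h⟩ : ℕ) + 1 = (m : ℕ) ∧
        (f ⟨j + 1, h⟩ : ℕ) = (f ⟨j, Nat.lt_of_succ_lt h⟩ : ℕ) + 2) := by
    intro j h
    have hab : (f ⟨j, Nat.lt_of_succ_lt h⟩ : ℕ) < (f ⟨j + 1, h⟩ : ℕ) := by
      have := hf (show (⟨j, Nat.lt_of_succ_lt h⟩ : Fin (n - 1)) < ⟨j + 1, h⟩ by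
        simp [Fin.lt_def])
      exact this
    by_cases hb : (f ⟨j + 1, h⟩ : ℕ) = (f ⟨j, Nat.lt_of_succ_lt h⟩ : ℕ) + 1
    · exact Or.inl hb
    · right
      have key : ∀ (v : ℕ) (hv : v < n), (f ⟨j, Nat.lt_of_succ_lt h⟩ : ℕ) < v →
          v < (f ⟨j + 1, h⟩ : ℕ) → v = (m : ℕ) := by
        intro v hv hva hvb
        have : (⟨v, hv⟩ : Fin n) = m := by
          apply hrange
          intro c hc
          rcases le_or_gt (c : ℕ) j with hcj | hcj
          · have : f c ≤ f ⟨j, Nat.lt_of_succ_lt h⟩ := hf.monotone (by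
              rw [Fin.le_def]; exact hcj)
            rw [hc] at this
            rw [Fin.le_def] at this
            simp at this
            omega
          · have : f ⟨j + 1, h⟩ ≤ f c := hf.monotone (by
              rw [Fin.le_def]; exact hcj)
            rw [hc] at this
            rw [Fin.le_def] at this
            simp at this
            omega
        exact congrArg Fin.val this
      have h1 := key ((f ⟨j, Nat.lt_of_succ_lt h⟩ : ℕ) + 1)
        (by have := (f ⟨j + 1, h⟩).isLt; omega) (by omega) (by omega)
      refine ⟨h1, ?_⟩
      by_contra hb2
      have h2 := key ((f ⟨j, Nat.lt_of_succ_lt h⟩ : ℕ) + 2)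
        (by have := (f ⟨j + 1, h⟩).isLt; omega) (by omega) (by omega)
      omega
  -- analysis of an adjacency of σ
  have adj_analysis : ∀ (j : ℕ) (h : j + 1 < n - 1),
      (σ ⟨j + 1, h⟩ : ℕ) = (σ ⟨j, Nat.lt_of_succ_lt h⟩ : ℕ) + 1 →
      (π m : ℕ) = (π (f ⟨j, Nat.lt_of_succ_lt h⟩) : ℕ) + 1 ∨
      ((f ⟨j, Nat.lt_of_succ_lt h⟩ : ℕ) + 1 = (m : ℕ) ∧
        (f ⟨j + 1, h⟩ : ℕ) = (m : ℕ) + 1 ∧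
        (π (f ⟨j + 1, h⟩) : ℕ) = (π (f ⟨j, Nat.lt_of_succ_lt h⟩) : ℕ) + 1) := by
    intro j h hadj
    set a := f ⟨j, Nat.lt_of_succ_lt h⟩ with ha_def
    set b := f ⟨j + 1, h⟩ with hb_def
    have hpab : π a < π b := by
      apply (hiso _ _).1
      rw [Fin.lt_def]; omega
    have between : ∀ c : Fin (n - 1), ¬ (π a < π (f c) ∧ π (f c) < π b) := by
      rintro c ⟨h1, h2⟩
      have g1 : σ ⟨j, Nat.lt_of_succ_lt h⟩ < σ c := (hiso _ _).2 h1
      have g2 : σ c < σ ⟨j + 1, h⟩ := (hiso _ _).2 h2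
      rw [Fin.lt_def] at g1 g2
      omega
    have hpab' : (π a : ℕ) < (π b : ℕ) := hpab
    -- helper: if the value gap is ≥ 2 then π m = π a + 1
    have midval : (π a : ℕ) + 2 ≤ (π b : ℕ) → (π m : ℕ) = (π a : ℕ) + 1 := by
      intro hgap
      have hv : (π a : ℕ) + 1 < n := by have := (π b).isLt; omega
      set w : Fin n := ⟨(π a : ℕ) + 1, hv⟩ with hw
      have hpm : π.symm w = m := by
        apply hrange
        intro c hc
        apply between c
        have : π (f c) = w := by rw [hc, Equiv.apply_symm_apply]
        constructor
        · rw [this, Fin.lt_def]; simp [hw]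
        · rw [this, Fin.lt_def]; simp [hw]; omega
      have : π m = w := by rw [← hpm, Equiv.apply_symm_apply]
      rw [this]
    rcases gapd j h with hb | ⟨hm1, hb2⟩
    · -- consecutive positions in π
      left
      apply midval
      have hne : (π b : ℕ) ≠ (π a : ℕ) + 1 := by
        intro heq
        apply hnoadj (a : ℕ)
        refine ⟨by have := b.isLt; omega, ?_⟩
        have e1 : (⟨(a : ℕ) + 1, by have := b.isLt; omega⟩ : Fin n) = b :=
          Fin.val_injective (by simp; omega)
        have e2 : (⟨(a : ℕ), by omega⟩ : Fin n) = a := Fin.val_injective rfl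
        rw [e1, e2]
        exact heq
      omega
    · -- positions straddle m
      right
      refine ⟨hm1, by omega, ?_⟩
      by_contra hne
      have hgap : (π a : ℕ) + 2 ≤ (π b : ℕ) := by omega
      have hπm := midval hgap
      apply hnoadj (a : ℕ)
      refine ⟨by have := m.isLt; omega, ?_⟩
      have e1 : (⟨(a : ℕ) + 1, by have := m.isLt; omega⟩ : Fin n) = m :=
        Fin.val_injective (by simp; omega)
      have e2 : (⟨(a : ℕ), by omega⟩ : Fin n) = a := Fin.val_injective rfl
      rw [e1, e2]
      exact hπm
  -- extract the two adjacencies of σ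
  obtain ⟨j₁, j₂, hjne, hjset⟩ := Finset.card_eq_two.mp haσ
  have hadj1 : adjAt σ j₁ := by
    have : j₁ ∈ (Finset.range (n - 1)).filter fun i => adjAt σ i := by
      rw [hjset]; exact Finset.mem_insert_self _ _
    exact (Finset.mem_filter.mp this).2
  have hadj2 : adjAt σ j₂ := by
    have : j₂ ∈ (Finset.range (n - 1)).filter fun i => adjAt σ i := by
      rw [hjset]; exact Finset.mem_insert_of_mem (Finset.mem_singleton_self _)
    exact (Finset.mem_filter.mp this).2
  obtain ⟨h1, ha1⟩ := hadj1
  obtain ⟨h2, ha2⟩ := hadj2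
  -- at least one adjacency is of "gap" type
  have typeA : ∃ (j : ℕ) (h : j + 1 < n - 1),
      (f ⟨j, Nat.lt_of_succ_lt h⟩ : ℕ) + 1 = (m : ℕ) ∧
      (f ⟨j + 1, h⟩ : ℕ) = (m : ℕ) + 1 ∧
      (π (f ⟨j + 1, h⟩) : ℕ) = (π (f ⟨j, Nat.lt_of_succ_lt h⟩) : ℕ) + 1 := by
    rcases adj_analysis j₁ h1 ha1 with L1 | R1
    · rcases adj_analysis j₂ h2 ha2 with L2 | R2
      · exfalso
        have : π (f ⟨j₁, Nat.lt_of_succ_lt h1⟩) = π (f ⟨j₂, Nat.lt_of_succ_lt h2⟩) :=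
          Fin.val_injective (by omega)
        have := hf.injective (π.injective this)
        exact hjne (by simpa using congrArg Fin.val this)
      · exact ⟨j₂, h2, R2⟩
    · exact ⟨j₁, h1, R1⟩
  obtain ⟨j, h, hA1, hA2, hA3⟩ := typeA
  set A := f ⟨j, Nat.lt_of_succ_lt h⟩ with hA_def
  set B := f ⟨j + 1, h⟩ with hB_def
  have hmc : (m : ℕ) + 1 < n := by have := B.isLt; omega
  have hm1 : 1 ≤ (m : ℕ) := by omega
  -- locate the descent of π: d + 1 = m or d = m
  have hd_loc : d + 1 = (m : ℕ) ∨ d = (m : ℕ) := by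
    by_cases hc : (π m : ℕ) < (π A : ℕ)
    · left
      have hdm : descends π ((m : ℕ) - 1) := by
        refine ⟨by omega, ?_⟩
        have e1 : (⟨(m : ℕ) - 1 + 1, by omega⟩ : Fin n) = m := Fin.val_injective (by simp; omega)
        have e2 : (⟨(m : ℕ) - 1, by omega⟩ : Fin n) = A := Fin.val_injective (by simp; omega)
        rw [e1, e2]
        exact hc
      have := hdu _ hdm
      omega
    · right
      have hAm : π A ≠ π m := fun he => hm _ (π.injective he)
      have hBm : π B ≠ π m := fun he => hm _ (π.injective he)
      have hAm' : (π A : ℕ) ≠ (π m : ℕ) := fun he => hAm (Fin.val_injective he)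
      have hBm' : (π B : ℕ) ≠ (π m : ℕ) := fun he => hBm (Fin.val_injective he)
      have hdm : descends π (m : ℕ) := by
        refine ⟨hmc, ?_⟩
        have e1 : (⟨(m : ℕ) + 1, hmc⟩ : Fin n) = B := Fin.val_injective (by simp; omega)
        have e2 : (⟨(m : ℕ), by omega⟩ : Fin n) = m := Fin.val_injective rfl
        rw [e1, e2]
        show (π B : ℕ) < (π m : ℕ)
        omega
      exact (hdu _ hdm).symm
  -- σ has no descents: contradiction
  have hzero : descentCount σ = 0 := by
    rw [descentCount, Finset.card_eq_zero, Finset.filter_eq_empty_iff]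
    rintro i _ ⟨h', hlt⟩
    have hba : π (f ⟨i + 1, h'⟩) < π (f ⟨i, Nat.lt_of_succ_lt h'⟩) := (hiso _ _).1 hlt
    have hba' : (π (f ⟨i + 1, h'⟩) : ℕ) < (π (f ⟨i, Nat.lt_of_succ_lt h'⟩) : ℕ) := hba
    set a := f ⟨i, Nat.lt_of_succ_lt h'⟩ with ha_def
    set b := f ⟨i + 1, h'⟩ with hb_def
    have ham : (a : ℕ) ≠ (m : ℕ) := fun he => hm _ (Fin.val_injective he)
    have hbm : (b : ℕ) ≠ (m : ℕ) := fun he => hm _ (Fin.val_injective he)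
    rcases gapd i h' with hb | ⟨hg1, hg2⟩
    · -- consecutive: descent of π at position a, impossible location
      have hdesc : descends π (a : ℕ) := by
        refine ⟨by have := b.isLt; omega, ?_⟩
        have e1 : (⟨(a : ℕ) + 1, by have := b.isLt; omega⟩ : Fin n) = b :=
          Fin.val_injective (by simp; omega)
        have e2 : (⟨(a : ℕ), by omega⟩ : Fin n) = a := Fin.val_injective rfl
        rw [e1, e2]
        exact hba
      have := hdu _ hdesc
      omega
    · -- gap pair: must be (A, B), but that is an ascent
      have ea : a = A := Fin.val_injective (by omega)
      have eb : b = B := Fin.val_injective (by omega)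
      rw [ea, eb] at hba'
      omega
  omega
end
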